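/- arXiv:1802.09396 — 12 statements merged into one kernel-verified Lean document; each statement's English description precedes it below -/
import Mathlib

section
/- Let c ≥ 0 and β ∈ (0,1] with c > 0 or β < 1, and let F be a Borel probability measure on [0,1] such that β·∫_{[0,1]} x dF(x) > c. Then there exists a unique real number z satisfying z = -c + β·∫_{[0,1]} max(x,z) dF(x), and this z lies in the open interval (0,1). -/
/-! Write `g z = -c + β ∫ max(x, z) dF - z`, whose zeros are the reservation values. Since
`z ↦ max(x, z)` is convex, `g` is convex, hence continuous. Because `F` lives on `[0, 1]`,
`g 0 = β ∫ x dF - c > 0`, while `g w = -c - (1 - β) w < 0` for every `w ≥ 1`; the intermediate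
value theorem gives a zero in `(0, 1)`. A convex function that is negative at some point `b`
has at most one zero to the left of `b`, which gives uniqueness. -/

open MeasureTheory Set

theorem ConvexOn.eq_of_map_eq_zero_of_map_neg {𝕜 : Type*} [Field 𝕜] [LinearOrder 𝕜]
    [IsStrictOrderedRing 𝕜] {s : Set 𝕜} {g : 𝕜 → 𝕜} (hg : ConvexOn 𝕜 s g) {u v b : 𝕜}
    (hu : u ∈ s) (hv : v ∈ s) (hb : b ∈ s) (hub : u < b) (hvb : v < b)
    (hgu : g u = 0) (hgv : g v = 0) (hgb : g b < 0) : u = v := by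
  have no_two_zeros : ∀ x y, x ∈ s → x < y → y < b → g x = 0 → g y = 0 → False := by
    intro x y hx hxy hyb hgx hgy
    have slope := hg.slope_mono_adjacent hx hb hxy hyb
    rw [hgx, hgy, sub_self, zero_div, sub_zero] at slope
    exact (div_neg_of_neg_of_pos hgb (sub_pos.mpr hyb)).not_ge slope
  by_contra hne
  rcases lt_or_gt_of_ne hne with huv | hvu
  · exact no_two_zeros u v hu huv hvb hgu hgv
  · exact no_two_zeros v u hv hvu hub hgv hgu

section ExpectedMax

variable {F : Measure ℝ}

theorem integrable_max_const [IsFiniteMeasure F] (hX : Integrable (fun x => x) F) (z : ℝ) :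
    Integrable (fun x => max x z) F :=
  hX.sup (integrable_const z)

theorem convexOn_integral_max [IsFiniteMeasure F] (hX : Integrable (fun x => x) F) :
    ConvexOn ℝ univ fun z => ∫ x, max x z ∂F := by
  refine ⟨convex_univ, fun u _ v _ a b ha hb hab => ?_⟩
  simp only [smul_eq_mul]
  have hmax : ∀ x, max x (a * u + b * v) ≤ a * max x u + b * max x v := fun x =>
    max_le
      (calc x = a * x + b * x := by rw [← add_mul, hab, one_mul]
        _ ≤ a * max x u + b * max x v := by gcongr <;> exact le_max_left _ _)
      (by gcongr <;> exact le_max_right _ _)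
  calc ∫ x, max x (a * u + b * v) ∂F
      ≤ ∫ x, (a * max x u + b * max x v) ∂F :=
        integral_mono (integrable_max_const hX _)
          (((integrable_max_const hX u).const_mul a).add
            ((integrable_max_const hX v).const_mul b)) hmax
    _ = a * ∫ x, max x u ∂F + b * ∫ x, max x v ∂F := by
        rw [integral_add ((integrable_max_const hX u).const_mul a)
          ((integrable_max_const hX v).const_mul b), integral_const_mul, integral_const_mul]

theorem integral_max_of_ae_le [IsProbabilityMeasure F] {z : ℝ} (h : ∀ᵐ x ∂F, x ≤ z) :
    ∫ x, max x z ∂F = z := by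
  rw [integral_congr_ae (h.mono fun _ hx => max_eq_right hx), integral_const, probReal_univ,
    one_smul]

theorem integral_max_of_ae_ge {z : ℝ} (h : ∀ᵐ x ∂F, z ≤ x) :
    ∫ x, max x z ∂F = ∫ x, x ∂F :=
  integral_congr_ae (h.mono fun _ hx => max_eq_left hx)

end ExpectedMax

/-- With frictions (`c > 0` or `β < 1`) and `β·mean(F) > c`, there is a unique
reservation value `z` with `z = -c + β·∫ max(x,z) dF`, and it lies in `(0,1)`. -/
theorem stmt_2 (c β : ℝ) (hc : 0 ≤ c) (hβ : 0 < β) (hβ1 : β ≤ 1)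
    (hfric : 0 < c ∨ β < 1)
    (F : Measure ℝ) [IsProbabilityMeasure F] (hF : F (Set.Icc (0:ℝ) 1)ᶜ = 0)
    (hval : c < β * ∫ x, x ∂F) :
    ∃ z : ℝ, (z = -c + β * ∫ x, max x z ∂F) ∧ z ∈ Set.Ioo (0:ℝ) 1 ∧
      ∀ w : ℝ, (w = -c + β * ∫ x, max x w ∂F) → w = z := by
  have hsupp : ∀ᵐ x ∂F, x ∈ Icc (0 : ℝ) 1 := ae_iff.mpr hF
  have hX : Integrable (fun x => x) F := .of_mem_Icc 0 1 aemeasurable_id hsupp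
  set g : ℝ → ℝ := fun z => β * ∫ x, max x z ∂F - z - c with hg_def
  have hg : ConvexOn ℝ univ g :=
    (((convexOn_integral_max hX).smul hβ.le).sub (concaveOn_id convex_univ)).add_const (-c)
  have hg_pos : 0 < g 0 := by
    simp only [hg_def, integral_max_of_ae_ge (hsupp.mono fun x hx => hx.1)]
    linarith
  have hg_neg : ∀ w, 1 ≤ w → g w < 0 := fun w hw => by
    simp only [hg_def, integral_max_of_ae_le (hsupp.mono fun x hx => hx.2.trans hw)]
    rcases hfric with h | h <;> nlinarith
  obtain ⟨z, hz, hgz⟩ := intermediate_value_Ioo' zero_le_one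
    ((hg.continuousOn isOpen_univ).mono (subset_univ _)) ⟨hg_neg 1 le_rfl, hg_pos⟩
  refine ⟨z, by linarith [hgz], hz, fun w hw => ?_⟩
  have hb : 1 ≤ max w z + 1 := by linarith [le_max_right w z, hz.1]
  exact hg.eq_of_map_eq_zero_of_map_neg (mem_univ w) (mem_univ z) (mem_univ _)
    (by linarith [le_max_left w z]) (by linarith [le_max_right w z])
    (by simp only [hg_def]; linarith) hgz (hg_neg _ hb)
end

section
/- Let c ≥ 0 and β ∈ (0,1] with c > 0 or β < 1, let μ ∈ (0,1) with βμ > c, and let G₀ = (1-μ)·δ₀ + μ·δ₁. Then z₀ := (βμ - c)/(1 - β(1-μ)) is the reservation value of G₀, i.e., z₀ = -c + β·∫ max(x,z₀) dG₀(x); and for every Borel probability measure F on [0,1] with mean μ and F ≠ G₀, any reservation value z_F of F satisfies z_F < z₀. In other words, the fully revealing (Bernoulli) signal induces a strictly higher reservation value than any other distribution in M(μ). -/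
/-!
On `[0, 1]` the convex function `x ↦ max x z` (for `0 < z < 1`) lies below its chord
`x ↦ z + (1 - z) x`, strictly on `(0, 1)`. Hence a measure with mean `μ` has
`∫ max x z ≤ z + (1 - z) μ`, with equality only when it charges nothing but `{0, 1}`, which
together with the mean forces it to be the Bernoulli measure `G₀`. For any other `F`, the
reservation equation gives `z < -c + β (z + (1 - z) μ)`, i.e. `z < z₀`; reservation values
outside `(0, 1)` are excluded directly.
-/

open MeasureTheory Set

open scoped ENNReal

theorem integral_smul_dirac_add_smul_dirac {α : Type*} [MeasurableSpace α]
    [MeasurableSingletonClass α] {a b : ℝ≥0∞} (ha : a ≠ ∞) (hb : b ≠ ∞) (p q : α)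
    (f : α → ℝ) :
    ∫ x, f x ∂(a • Measure.dirac p + b • Measure.dirac q) = a.toReal * f p + b.toReal * f q := by
  rw [integral_add_measure ((integrable_dirac enorm_lt_top).smul_measure ha)
      ((integrable_dirac enorm_lt_top).smul_measure hb),
    integral_smul_measure, integral_smul_measure, integral_dirac, integral_dirac, smul_eq_mul,
    smul_eq_mul]

theorem Continuous.integrable_of_ae_mem_compact {X : Type*} [TopologicalSpace X] [T2Space X]
    [MeasurableSpace X] [OpensMeasurableSpace X] {F : Measure X} [IsFiniteMeasure F]
    {K : Set X} (hK : IsCompact K) (hFK : ∀ᵐ x ∂F, x ∈ K) {f : X → ℝ} (hf : Continuous f) :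
    Integrable f F := by
  simpa [IntegrableOn, Measure.restrict_eq_self_of_ae_mem hFK] using
    hf.continuousOn.integrableOn_compact (μ := F) hK

theorem eq_smul_dirac_add_smul_dirac_of_ae_mem_pair {α : Type*} [MeasurableSpace α]
    [MeasurableSingletonClass α] {F : Measure α} {p q : α} (hpq : p ≠ q)
    (hF : ∀ᵐ x ∂F, x ∈ ({p, q} : Set α)) :
    F = F {p} • Measure.dirac p + F {q} • Measure.dirac q := by
  rw [← Measure.restrict_singleton, ← Measure.restrict_singleton,
    ← Measure.restrict_union (by simpa using hpq) (measurableSet_singleton q),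
    Set.singleton_union, Measure.restrict_eq_self_of_ae_mem hF]

theorem eq_bernoulli_of_measure_Ioo_eq_zero {F : Measure ℝ} [IsProbabilityMeasure F] {μ : ℝ}
    (hF : ∀ᵐ x ∂F, x ∈ Icc (0 : ℝ) 1) (hF01 : F (Ioo 0 1) = 0) (hmean : ∫ x, x ∂F = μ) :
    F = ENNReal.ofReal (1 - μ) • Measure.dirac 0 + ENNReal.ofReal μ • Measure.dirac 1 := by
  have hpair : ∀ᵐ x ∂F, x ∈ ({0, 1} : Set ℝ) := by
    filter_upwards [hF, measure_eq_zero_iff_ae_notMem.1 hF01] with x hx hx'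
    rcases hx.1.eq_or_lt with rfl | h0
    · simp
    rcases hx.2.eq_or_lt with rfl | h1
    · simp
    exact absurd ⟨h0, h1⟩ hx'
  have hF := eq_smul_dirac_add_smul_dirac_of_ae_mem_pair zero_ne_one hpair
  set a := F {0}
  set b := F {1}
  have hab : a + b = 1 := by
    have h := measure_univ (μ := F)
    rw [hF] at h
    simpa using h
  have hb : b.toReal = μ := by
    rw [hF, integral_smul_dirac_add_smul_dirac (measure_ne_top F {0})
      (measure_ne_top F {1})] at hmean
    simpa using hmean
  have ha : a.toReal = 1 - μ := by
    rw [← hb, eq_sub_iff_add_eq, ← ENNReal.toReal_add (measure_ne_top F {0})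
      (measure_ne_top F {1}), hab, ENNReal.toReal_one]
  rw [← ha, ← hb, ENNReal.ofReal_toReal (measure_ne_top F {0}),
    ENNReal.ofReal_toReal (measure_ne_top F {1})]
  exact hF

theorem max_le_chord {x z : ℝ} (hx : x ∈ Icc (0 : ℝ) 1) (hz : z ∈ Icc (0 : ℝ) 1) :
    max x z ≤ z + (1 - z) * x :=
  max_le (by nlinarith [hx.2, hz.1]) (by nlinarith [hx.1, hz.2])

theorem max_lt_chord {x z : ℝ} (hx : x ∈ Ioo (0 : ℝ) 1) (hz : z ∈ Ioo (0 : ℝ) 1) :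
    max x z < z + (1 - z) * x :=
  max_lt (by nlinarith [hx.2, hz.1]) (by nlinarith [hx.1, hz.2])

theorem integral_max_lt_chord {F : Measure ℝ} [IsProbabilityMeasure F]
    (hF : ∀ᵐ x ∂F, x ∈ Icc (0 : ℝ) 1) (hF01 : F (Ioo 0 1) ≠ 0) {z : ℝ} (hz : z ∈ Ioo (0 : ℝ) 1) :
    ∫ x, max x z ∂F < z + (1 - z) * ∫ x, x ∂F := by
  have hint : ∀ {f : ℝ → ℝ}, Continuous f → Integrable f F :=
    fun hf => hf.integrable_of_ae_mem_compact isCompact_Icc hF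
  have hgap : 0 < ∫ x, (z + (1 - z) * x - max x z) ∂F := by
    rw [integral_pos_iff_support_of_nonneg_ae _ (hint (by fun_prop))]
    · refine hF01.bot_lt.trans_le (measure_mono fun x hx => ?_)
      exact (sub_pos.2 (max_lt_chord hx hz)).ne'
    · filter_upwards [hF] with x hx
      exact sub_nonneg.2 (max_le_chord hx (Ioo_subset_Icc_self hz))
  rwa [integral_sub (hint (by fun_prop)) (hint (by fun_prop)), integral_add
    (integrable_const z) (hint (by fun_prop)), integral_const_mul, integral_const,
    probReal_univ, one_smul, sub_pos] at hgap

/-- With frictions, `z₀ = (βμ-c)/(1-β(1-μ))` is the reservation value of the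
Bernoulli measure `G₀`, and every other measure in `M(μ)` has a strictly lower reservation
value. -/
theorem stmt_3 (c β μ : ℝ) (hc : 0 ≤ c) (hβ : 0 < β) (hβ1 : β ≤ 1)
    (hfric : 0 < c ∨ β < 1) (hμ : 0 < μ) (hμ1 : μ < 1) (hval : c < β * μ) :
    (let G₀ : Measure ℝ :=
      ENNReal.ofReal (1 - μ) • Measure.dirac (0:ℝ) + ENNReal.ofReal μ • Measure.dirac (1:ℝ)
     let z₀ : ℝ := (β * μ - c) / (1 - β * (1 - μ))
     (z₀ = -c + β * ∫ x, max x z₀ ∂G₀) ∧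
       ∀ F : Measure ℝ, IsProbabilityMeasure F → F (Set.Icc (0:ℝ) 1)ᶜ = 0 →
         (∫ x, x ∂F) = μ → F ≠ G₀ →
           ∀ z : ℝ, (z = -c + β * ∫ x, max x z ∂F) → z < z₀) := by
  intro G₀ z₀
  have hden : 0 < 1 - β * (1 - μ) := by nlinarith
  have hz₀ : z₀ ∈ Ioo (0 : ℝ) 1 := by
    refine ⟨div_pos (by linarith) hden, (div_lt_one hden).2 ?_⟩
    rcases hfric with h | h <;> nlinarith
  refine ⟨?_, fun F hF hsupp hmean hne z hz => ?_⟩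
  · rw [integral_smul_dirac_add_smul_dirac ENNReal.ofReal_ne_top ENNReal.ofReal_ne_top,
      ENNReal.toReal_ofReal (by linarith), ENNReal.toReal_ofReal hμ.le,
      max_eq_right hz₀.1.le, max_eq_left hz₀.2.le]
    simp only [z₀]
    field_simp
    ring
  have hF : ∀ᵐ x ∂F, x ∈ Icc (0 : ℝ) 1 := ae_iff.2 hsupp
  rcases le_or_gt z 0 with hz0 | hz0
  · exact hz0.trans_lt hz₀.1
  have hz1 : z < 1 := by
    by_contra! h
    have hconst : ∫ x, max x z ∂F = z := by
      rw [integral_congr_ae (hF.mono fun x hx => max_eq_right (hx.2.trans h)), integral_const,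
        probReal_univ, one_smul]
    rcases hfric with h' | h' <;> nlinarith
  have hF01 : F (Ioo 0 1) ≠ 0 := fun h => hne (eq_bernoulli_of_measure_Ioo_eq_zero hF h hmean)
  have hchord := integral_max_lt_chord hF hF01 ⟨hz0, hz1⟩
  rw [hmean] at hchord
  rw [lt_div_iff₀ hden]
  nlinarith [mul_lt_mul_of_pos_left hchord hβ]
end

section
/- Let c ≥ 0 and β ∈ (0,1] with c > 0 or β < 1, and let F and G be Borel probability measures on [0,1] such that ∫ f dF ≤ ∫ f dG for every continuous convex function f : [0,1] → ℝ (i.e., G is a mean-preserving spread of F). If z_F is a reservation value of F and z_G is a reservation value of G, then z_F ≤ z_G. -/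
open MeasureTheory

lemma int_max_aux {μ : Measure ℝ} [IsProbabilityMeasure μ]
    (hμ : μ (Set.Icc (0:ℝ) 1)ᶜ = 0) (z : ℝ) :
    Integrable (fun x => max x z) μ := by
  have hae : ∀ᵐ x ∂μ, x ∈ Set.Icc (0:ℝ) 1 := by
    exact mem_ae_iff.mpr hμ
  refine Integrable.mono' (integrable_const (max 1 |z|)) ?_ ?_
  · exact (continuous_id.max continuous_const).aestronglyMeasurable
  · filter_upwards [hae] with x hx
    rw [Real.norm_eq_abs, abs_of_nonneg (le_trans hx.1 (le_max_left _ _))]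
    exact max_le_max hx.2 (le_abs_self z)

/-- If `G` is a mean-preserving spread of `F` (i.e. `∫ f dF ≤ ∫ f dG` for every
continuous convex `f` on `[0,1]`), then the reservation value of `F` is at most that of `G`. -/
theorem stmt_4 (c β : ℝ) (hc : 0 ≤ c) (hβ : 0 < β) (hβ1 : β ≤ 1)
    (hfric : 0 < c ∨ β < 1)
    (F G : Measure ℝ) [IsProbabilityMeasure F] [IsProbabilityMeasure G]
    (hF : F (Set.Icc (0:ℝ) 1)ᶜ = 0) (hG : G (Set.Icc (0:ℝ) 1)ᶜ = 0)
    (hmps : ∀ f : ℝ → ℝ, ContinuousOn f (Set.Icc 0 1) → ConvexOn ℝ (Set.Icc 0 1) f →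
      ∫ x, f x ∂F ≤ ∫ x, f x ∂G)
    (zF zG : ℝ)
    (hzF : zF = -c + β * ∫ x, max x zF ∂F)
    (hzG : zG = -c + β * ∫ x, max x zG ∂G) :
    zF ≤ zG := by
  by_contra hlt'
  push_neg at hlt'
  set d := zF - zG with hd
  have hd0 : 0 < d := sub_pos.mpr hlt'
  have hGG := int_max_aux hG zG
  -- mean-preserving spread applied to the convex function `max · zF`
  have hconv : ∫ x, max x zF ∂F ≤ ∫ x, max x zF ∂G := by
    apply hmps
    · exact (continuous_id.max continuous_const).continuousOn
    · exact (convexOn_id (convex_Icc 0 1)).sup (convexOn_const _ (convex_Icc 0 1))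
  -- the truncation function is integrable
  have hmin : Integrable (fun x => min (max x zG - zG) d) G := by
    refine Integrable.mono' (integrable_const d) ?_ ?_
    · exact (((continuous_id.max continuous_const).sub continuous_const).min
        continuous_const).aestronglyMeasurable
    · refine ae_of_all _ fun x => ?_
      rw [Real.norm_eq_abs,
        abs_of_nonneg (le_min (sub_nonneg.mpr (le_max_right x zG)) hd0.le)]
      exact min_le_right _ _
  -- pointwise identity
  have hpt : ∀ x : ℝ, max x zF = max x zG + d - min (max x zG - zG) d := by
    intro x
    rcases le_total x zG with h | h
    · have h' : x ≤ zF := h.trans hlt'.le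
      rw [max_eq_right h, max_eq_right h', min_eq_left (by linarith)]
      linarith
    · rcases le_total x zF with h' | h'
      · rw [max_eq_right h', max_eq_left h, min_eq_left (by linarith)]
        linarith
      · rw [max_eq_left h', max_eq_left h, min_eq_right (by linarith)]
        linarith
  have hcalc : ∫ x, max x zF ∂G
      = (∫ x, max x zG ∂G) + d - ∫ x, min (max x zG - zG) d ∂G := by
    have h1 : Integrable (fun x => max x zG + d) G := hGG.add (integrable_const d)
    simp only [hpt]
    rw [integral_sub h1 hmin, integral_add hGG (integrable_const d), integral_const]
    simp
  set I := ∫ x, min (max x zG - zG) d ∂G with hIdef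
  have hI0 : 0 ≤ I :=
    integral_nonneg fun x => le_min (sub_nonneg.mpr (le_max_right x zG)) hd0.le
  have hkey : zF ≤ zG + β * d - β * I := by
    calc zF = -c + β * ∫ x, max x zF ∂F := hzF
    _ ≤ -c + β * ∫ x, max x zF ∂G := by nlinarith [hconv]
    _ = -c + β * ((∫ x, max x zG ∂G) + d - I) := by rw [hcalc]
    _ = zG + β * d - β * I := by linear_combination -hzG
  have h2 : d ≤ β * d - β * I := by linarith
  by_cases hb : β < 1
  · have : β * d < 1 * d := mul_lt_mul_of_pos_right hb hd0
    nlinarith [mul_nonneg hβ.le hI0]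
  · have hbe : β = 1 := le_antisymm hβ1 (not_lt.mp hb)
    have hc0 : 0 < c := hfric.resolve_right hb
    have hIzero : I = 0 := le_antisymm (by nlinarith) hI0
    have hae0 : (fun x => min (max x zG - zG) d) =ᵐ[G] 0 :=
      (integral_eq_zero_iff_of_nonneg
        (fun x => le_min (sub_nonneg.mpr (le_max_right x zG)) hd0.le) hmin).mp hIzero
    have hae1 : (fun x => max x zG) =ᵐ[G] fun _ => zG := by
      filter_upwards [hae0] with x hx
      simp only [Pi.zero_apply] at hx
      rcases min_cases (max x zG - zG) d with ⟨h1, h2'⟩ | ⟨h1, h2'⟩ <;>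
        · simp only [h1] at hx ⊢
          linarith [le_max_right x zG]
    have hG0 : ∫ x, max x zG ∂G = zG := by
      rw [integral_congr_ae hae1, integral_const]; simp
    rw [hG0, hbe] at hzG
    linarith
end

section
/- Let c > 0 and β ∈ (0,1], let H be a Borel probability measure on [0,1], and let z ∈ (0,1) be a reservation value of H. Then p := H((z,1]) > 0; and setting m := (1/p)·∫_{(z,1]} x dH(x), one has m > z, the measure Ĥ defined as the restriction of H to [0,z] plus an atom of mass p at m is a Borel probability measure on [0,1] with the same mean as H, and z is also a reservation value of Ĥ. That is, replacing the portion of a distribution lying above its reservation value by a single point mass at its conditional mean preserves the reservation value. -/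
/-!
If `H` put no mass above `z`, then `∫ max x z ∂H = z` and the reservation equation would read
`(1 - β) z = -c < 0`, impossible for `z > 0`; so `p = H((z,1]) > 0`. The conditional mean `m`
of `H` on `(z,1]` lies in `(z,1]` by the first moment method. Replacing `H` on `(z,1]` by the atom
`p δ_m` preserves the integral of every function `f` with `∫_{(z,1]} f dH = p f(m)`; both `x ↦ x`
and `x ↦ max x z` are such functions, since they are affine on `(z,1]` and `m > z`.
-/

open MeasureTheory Set

def IsReservationValue (c β : ℝ) (F : Measure ℝ) (z : ℝ) : Prop :=
  z = -c + β * ∫ x, max x z ∂F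

theorem integral_max_const_eq_of_ae_le {μ : Measure ℝ} [IsProbabilityMeasure μ] {z : ℝ}
    (h : ∀ᵐ x ∂μ, x ≤ z) : ∫ x, max x z ∂μ = z := by
  rw [integral_congr_ae (h.mono fun x hx => max_eq_right hx), integral_const, probReal_univ,
    one_smul]

theorem IsReservationValue.measure_Ioc_ne_zero {μ : Measure ℝ} [IsProbabilityMeasure μ]
    {c β z b : ℝ} (hres : IsReservationValue c β μ z) (hc : 0 < c) (hβ1 : β ≤ 1) (hz : 0 ≤ z)
    (hb : ∀ᵐ x ∂μ, x ≤ b) : μ (Ioc z b) ≠ 0 := by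
  intro h0
  have hle : ∀ᵐ x ∂μ, x ≤ z := by
    filter_upwards [hb, measure_eq_zero_iff_ae_notMem.1 h0] with x hxb hx
    exact not_lt.1 fun hzx => hx ⟨hzx, hxb⟩
  rw [IsReservationValue, integral_max_const_eq_of_ae_le hle] at hres
  nlinarith

section Collapse

variable {α E : Type*} [MeasurableSpace α] [NormedAddCommGroup E] [NormedSpace ℝ E]
  [CompleteSpace E] {μ : Measure α} {t s : Set α}

theorem restrict_add_smul_dirac_apply_eq_zero {u : Set α} (hu : MeasurableSet u) (hμu : μ u = 0)
    {a : α} (ha : a ∉ u) : (μ.restrict t + μ s • Measure.dirac a) u = 0 := by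
  rw [Measure.add_apply, Measure.smul_apply, Measure.dirac_apply' _ hu,
    indicator_of_notMem ha, smul_zero, add_zero, Measure.restrict_apply hu]
  exact measure_mono_null inter_subset_left hμu

theorem isProbabilityMeasure_restrict_add_smul_dirac [IsProbabilityMeasure μ]
    (hts : Disjoint t s) (hs : MeasurableSet s) (hcover : ∀ᵐ x ∂μ, x ∈ t ∪ s) (a : α) :
    IsProbabilityMeasure (μ.restrict t + μ s • Measure.dirac a) := by
  constructor
  rw [Measure.add_apply, Measure.smul_apply, Measure.restrict_apply_univ, measure_univ,
    smul_eq_mul, mul_one, ← measure_union hts hs, ← Measure.restrict_apply_univ,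
    Measure.restrict_eq_self_of_ae_mem hcover, measure_univ]

theorem integral_restrict_add_smul_dirac [MeasurableSingletonClass α] {f : α → E}
    (hf : IntegrableOn f t μ) (hs : μ s ≠ ⊤) (a : α) :
    ∫ x, f x ∂(μ.restrict t + μ s • Measure.dirac a) = ∫ x in t, f x ∂μ + μ.real s • f a := by
  rw [integral_add_measure hf ((integrable_dirac (by finiteness)).smul_measure hs),
    integral_smul_measure, integral_dirac]
  rfl

theorem integral_restrict_add_smul_dirac_eq_integral [MeasurableSingletonClass α]
    [IsFiniteMeasure μ] (hts : Disjoint t s) (hs : MeasurableSet s)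
    (hcover : ∀ᵐ x ∂μ, x ∈ t ∪ s) {f : α → E} (hf : Integrable f μ) {a : α}
    (hfs : ∫ x in s, f x ∂μ = μ.real s • f a) :
    ∫ x, f x ∂(μ.restrict t + μ s • Measure.dirac a) = ∫ x, f x ∂μ := by
  rw [integral_restrict_add_smul_dirac hf.integrableOn (measure_ne_top μ s), ← hfs,
    ← setIntegral_union hts hs hf.integrableOn hf.integrableOn,
    Measure.restrict_eq_self_of_ae_mem hcover]

end Collapse

theorem stmt_5_general (c β : ℝ) (hc : 0 < c) (hβ1 : β ≤ 1)
    (H : Measure ℝ) [IsProbabilityMeasure H] (hH : H (Set.Icc (0:ℝ) 1)ᶜ = 0)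
    (z : ℝ) (hz : z ∈ Set.Ioo (0:ℝ) 1)
    (hres : z = -c + β * ∫ x, max x z ∂H) :
    0 < (H (Set.Ioc z 1)).toReal ∧
    (let p : ℝ := (H (Set.Ioc z 1)).toReal
     let m : ℝ := (1 / p) * ∫ x in Set.Ioc z 1, x ∂H
     let Hhat : Measure ℝ := H.restrict (Set.Icc 0 z) + ENNReal.ofReal p • Measure.dirac m
     z < m ∧ IsProbabilityMeasure Hhat ∧ Hhat (Set.Icc (0:ℝ) 1)ᶜ = 0 ∧
       (∫ x, x ∂Hhat) = (∫ x, x ∂H) ∧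
       z = -c + β * ∫ x, max x z ∂Hhat) := by
  obtain ⟨hz0, hz1⟩ := hz
  have hmem : ∀ᵐ x ∂H, x ∈ Icc (0:ℝ) 1 := ae_iff.2 hH
  have hint : Integrable (fun x : ℝ => x) H :=
    Integrable.of_bound measurable_id.aestronglyMeasurable 1 <| hmem.mono fun x hx => by
      rw [Real.norm_eq_abs, abs_le]
      exact ⟨by linarith [hx.1], hx.2⟩
  have hne : H (Ioc z 1) ≠ 0 :=
    IsReservationValue.measure_Ioc_ne_zero hres hc hβ1 hz0.le (hmem.mono fun x hx => hx.2)
  refine ⟨ENNReal.toReal_pos hne (measure_ne_top H _), ?_⟩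
  intro p m Hhat
  have hm : m = ⨍ x in Ioc z 1, x ∂H := by
    rw [setAverage_eq, smul_eq_mul, ← one_div]
    rfl
  obtain ⟨x₁, hx₁, hx₁m⟩ := exists_le_setAverage hne (measure_ne_top H _) hint.integrableOn
  obtain ⟨x₂, hx₂, hmx₂⟩ := exists_setAverage_le hne (measure_ne_top H _) hint.integrableOn
  have hzm : z < m := hm ▸ hx₁.1.trans_le hx₁m
  have hm1 : m ≤ 1 := hm ▸ hmx₂.trans hx₂.2
  have hHhat : Hhat = H.restrict (Icc 0 z) + H (Ioc z 1) • Measure.dirac m := by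
    simp only [Hhat, p, ENNReal.ofReal_toReal (measure_ne_top H _)]
  have hdisj : Disjoint (Icc 0 z) (Ioc z 1) :=
    disjoint_left.2 fun x hx hx' => hx'.1.not_ge hx.2
  have hcover : ∀ᵐ x ∂H, x ∈ Icc 0 z ∪ Ioc z 1 := by
    rwa [Icc_union_Ioc_eq_Icc hz0.le hz1.le]
  have hmean : ∫ x in Ioc z 1, x ∂H = H.real (Ioc z 1) • m := by
    rw [hm, measure_smul_setAverage _ (measure_ne_top H _)]
  have hmax : ∫ x in Ioc z 1, max x z ∂H = H.real (Ioc z 1) • max m z := by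
    rw [setIntegral_congr_fun measurableSet_Ioc fun x hx => max_eq_left hx.1.le,
      max_eq_left hzm.le, hmean]
  rw [hHhat]
  refine ⟨hzm, isProbabilityMeasure_restrict_add_smul_dirac hdisj measurableSet_Ioc hcover m,
    restrict_add_smul_dirac_apply_eq_zero measurableSet_Icc.compl hH
      (not_not.2 ⟨(hz0.trans hzm).le, hm1⟩),
    integral_restrict_add_smul_dirac_eq_integral hdisj measurableSet_Ioc hcover hint hmean, ?_⟩
  have hint_max : Integrable (fun x : ℝ => max x z) H := hint.sup (integrable_const z)
  rw [integral_restrict_add_smul_dirac_eq_integral hdisj measurableSet_Ioc hcover hint_max hmax]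
  exact hres

/-- Replacing the portion of a distribution lying above its reservation value
`z` by a single point mass (of the same weight `p = H((z,1])`) at its conditional mean `m`
yields a probability measure on `[0,1]` with the same mean and the same reservation value. -/
theorem stmt_5 (c β : ℝ) (hc : 0 < c) (hβ : 0 < β) (hβ1 : β ≤ 1)
    (H : Measure ℝ) [IsProbabilityMeasure H] (hH : H (Set.Icc (0:ℝ) 1)ᶜ = 0)
    (z : ℝ) (hz : z ∈ Set.Ioo (0:ℝ) 1)
    (hres : z = -c + β * ∫ x, max x z ∂H) :
    0 < (H (Set.Ioc z 1)).toReal ∧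
    (let p : ℝ := (H (Set.Ioc z 1)).toReal
     let m : ℝ := (1 / p) * ∫ x in Set.Ioc z 1, x ∂H
     let Hhat : Measure ℝ := H.restrict (Set.Icc 0 z) + ENNReal.ofReal p • Measure.dirac m
     z < m ∧ IsProbabilityMeasure Hhat ∧ Hhat (Set.Icc (0:ℝ) 1)ᶜ = 0 ∧
       (∫ x, x ∂Hhat) = (∫ x, x ∂H) ∧
       z = -c + β * ∫ x, max x z ∂Hhat) :=
  stmt_5_general c β hc hβ1 H hH z hz hres
end

section
/- Let n ≥ 2 be an integer and μ ∈ (0,1). If F ∈ M(μ) has an atom at some point b ∈ [0,1), i.e., F({b}) > 0, then F is not a symmetric equilibrium of the frictionless game: there exists G ∈ M(μ) with u_n(G,F) > 1/n. -/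
open MeasureTheory

/-- The fair-tie winning probability of one draw from `G` against `n-1` i.i.d. draws from
`F`, with exact ties broken uniformly at random. -/
noncomputable def winProb (n : ℕ) (G F : Measure ℝ) : ℝ :=
  ∫ x, (∑ i ∈ Finset.range n,
      ((n - 1).choose i : ℝ) * ((F {x}).toReal) ^ i * ((F (Set.Ico 0 x)).toReal) ^ (n - 1 - i)
        / ((i : ℝ) + 1)) ∂G

/-- `F ∈ M(μ)`: a Borel probability measure on `[0,1]` with mean `μ`. -/
def MemM (μ : ℝ) (F : Measure ℝ) : Prop :=
  IsProbabilityMeasure F ∧ F (Set.Icc (0:ℝ) 1)ᶜ = 0 ∧ (∫ x, x ∂F) = μ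

/-!
Move the atom of `F` at `b` slightly up, to `t = b + ε`. A draw at `t` instead of `b` wins with
probability larger by at least `m / (m + 1) · F{b}^m`, where `m = n - 1`: when all opponents
draw `b`, it now wins outright instead of sharing the prize. This raises the mean by `F{b} ε`,
which is compensated by moving a fraction `O(ε)` of the mass to `0`. For small `ε` the gain, of
order `F{b}^(m+1)`, beats the loss, of order `ε`, over the payoff `1 / n` of `F` against itself.

That `F` wins against itself with probability `1 / n` is the symmetry of `n` i.i.d. draws: the
index of the last maximum is uniformly distributed, and the probability that it is `j` is
`∫ F(-∞, x]^j F(-∞, x)^(m-j) dF(x)`. Summing over `j` recovers the fair-tie payoff by the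
identity `∑ C(m,i) a^i q^(m-i) / (i+1) = ∑_j (q+a)^j q^(m-j) / (m+1)`.
-/

open Set

def lastArgmaxSet (m : ℕ) (j : Fin (m + 1)) : Set (Fin (m + 1) → ℝ) :=
  {w | ∀ i ≠ j, w i ∈ if i < j then Iic (w j) else Iio (w j)}

lemma iUnion_lastArgmaxSet (m : ℕ) : ⋃ j, lastArgmaxSet m j = univ := by
  refine eq_univ_of_forall fun w => mem_iUnion.2 ?_
  -- a lexicographic maximum of `(w i, i)` is the last maximizer of `w`
  obtain ⟨j, hj⟩ := Finite.exists_max fun i => toLex (w i, i)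
  refine ⟨j, fun i hij => ?_⟩
  have := Prod.Lex.toLex_le_toLex.1 (hj i)
  split_ifs with hlt
  · exact this.elim le_of_lt fun h => h.1.le
  · exact this.resolve_right fun h => hlt (h.2.lt_of_ne hij)

lemma pairwise_disjoint_lastArgmaxSet (m : ℕ) :
    Pairwise (Function.onFun Disjoint (lastArgmaxSet m)) := by
  suffices ∀ j j' : Fin (m + 1), j < j' → Disjoint (lastArgmaxSet m j) (lastArgmaxSet m j') from
    fun j j' hne => hne.lt_or_gt.elim (this j j') fun h => (this j' j h).symm
  refine fun j j' hlt => disjoint_left.2 fun w hw hw' => ?_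
  have h1 : w j ≤ w j' := by simpa [hlt] using hw' j hlt.ne
  have h2 : w j' < w j := by simpa [hlt.not_gt] using hw j' hlt.ne'
  exact (h1.trans_lt h2).false

def lastArgmaxCoords (m : ℕ) (j : Fin (m + 1)) : Set (ℝ × (Fin m → ℝ)) :=
  {p | ∀ k, p.2 k ∈ if j.succAbove k < j then Iic p.1 else Iio p.1}

lemma lastArgmaxSet_eq_preimage (m : ℕ) (j : Fin (m + 1)) :
    lastArgmaxSet m j
      = MeasurableEquiv.piFinSuccAbove (fun _ => ℝ) j ⁻¹' lastArgmaxCoords m j := by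
  ext w
  simp [lastArgmaxSet, lastArgmaxCoords, Fin.forall_iff_succAbove j, Fin.succAbove_ne,
    Fin.removeNth_apply]

lemma measurableSet_lastArgmaxCoords (m : ℕ) (j : Fin (m + 1)) :
    MeasurableSet (lastArgmaxCoords m j) := by
  rw [lastArgmaxCoords, ofPred_forall]
  refine MeasurableSet.iInter fun k => ?_
  split_ifs
  · exact measurableSet_le ((measurable_pi_apply k).comp measurable_snd) measurable_fst
  · exact measurableSet_lt ((measurable_pi_apply k).comp measurable_snd) measurable_fst

lemma measurableSet_lastArgmaxSet (m : ℕ) (j : Fin (m + 1)) :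
    MeasurableSet (lastArgmaxSet m j) := by
  rw [lastArgmaxSet_eq_preimage]
  exact (measurableSet_lastArgmaxCoords m j).preimage (MeasurableEquiv.measurable _)

lemma prod_ite_castSucc_lt {M : Type*} [CommMonoid M] (m : ℕ) (j : Fin (m + 1)) (a b : M) :
    ∏ k : Fin m, (if k.castSucc < j then a else b) = a ^ (j : ℕ) * b ^ (m - j) := by
  have hcard : (Finset.univ.filter fun k : Fin m => k.castSucc < j).card = j := by
    simp [Fin.lt_def, Fin.card_filter_val_lt, Nat.lt_succ_iff.mp j.isLt]
  rw [Finset.prod_ite, Finset.prod_const, Finset.prod_const, hcard, Finset.filter_not,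
    Finset.card_sdiff_of_subset (Finset.filter_subset _ _), hcard, Finset.card_univ,
    Fintype.card_fin]

lemma pi_lastArgmaxSet (F : Measure ℝ) [SigmaFinite F] (m : ℕ) (j : Fin (m + 1)) :
    Measure.pi (fun _ => F) (lastArgmaxSet m j)
      = ∫⁻ x, F (Iic x) ^ (j : ℕ) * F (Iio x) ^ (m - j) ∂F := by
  have hs := measurableSet_lastArgmaxCoords m j
  rw [lastArgmaxSet_eq_preimage, (measurePreserving_piFinSuccAbove (fun _ => F) j).measure_preimage
    hs.nullMeasurableSet, Measure.prod_apply hs]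
  refine lintegral_congr fun x => ?_
  have hsection : Prod.mk x ⁻¹' lastArgmaxCoords m j
      = univ.pi fun k => if j.succAbove k < j then Iic x else Iio x := by
    ext
    simp [lastArgmaxCoords, mem_pi]
  rw [hsection, Measure.pi_pi]
  simp_rw [apply_ite F, Fin.succAbove_lt_iff_castSucc_lt]
  exact prod_ite_castSucc_lt m j _ _

lemma measurable_measure_Iio (F : Measure ℝ) : Measurable fun x => F (Iio x) :=
  Monotone.measurable fun _ _ h => measure_mono (Iio_subset_Iio h)

lemma measurable_measure_Iic (F : Measure ℝ) : Measurable fun x => F (Iic x) :=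
  Monotone.measurable fun _ _ h => measure_mono (Iic_subset_Iic.2 h)

lemma lintegral_sum_pow_Iic_mul_pow_Iio (F : Measure ℝ) [IsProbabilityMeasure F] (m : ℕ) :
    ∫⁻ x, ∑ j ∈ Finset.range (m + 1), F (Iic x) ^ j * F (Iio x) ^ (m - j) ∂F = 1 := by
  rw [lintegral_finsetSum (f := fun j x => F (Iic x) ^ j * F (Iio x) ^ (m - j)) _ fun j _ =>
      ((measurable_measure_Iic F).pow_const j).mul ((measurable_measure_Iio F).pow_const _),
    ← Fin.sum_univ_eq_sum_range (fun j => ∫⁻ x, F (Iic x) ^ j * F (Iio x) ^ (m - j) ∂F)]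
  simp_rw [← pi_lastArgmaxSet]
  rw [← measure_biUnion_finset (fun j _ j' _ h => pairwise_disjoint_lastArgmaxSet m h)
    fun j _ => measurableSet_lastArgmaxSet m j]
  simp [iUnion_lastArgmaxSet]

lemma integral_sum_pow_Iic_mul_pow_Iio (F : Measure ℝ) [IsProbabilityMeasure F] (m : ℕ) :
    ∫ x, ∑ j ∈ Finset.range (m + 1),
      (F (Iic x)).toReal ^ j * (F (Iio x)).toReal ^ (m - j) ∂F = 1 := by
  have hmeas : Measurable fun x =>
      ∑ j ∈ Finset.range (m + 1), F (Iic x) ^ j * F (Iio x) ^ (m - j) :=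
    Finset.measurable_sum _ fun j _ =>
      ((measurable_measure_Iic F).pow_const j).mul ((measurable_measure_Iio F).pow_const _)
  have h := congrArg ENNReal.toReal (lintegral_sum_pow_Iic_mul_pow_Iio F m)
  rw [← integral_toReal hmeas.aemeasurable (ae_of_all _ fun x => by
      simp [ENNReal.sum_lt_top, ENNReal.mul_lt_top, measure_lt_top]),
    ENNReal.toReal_one] at h
  rw [← h]
  refine integral_congr_ae (ae_of_all _ fun x => ?_)
  dsimp only
  rw [ENNReal.toReal_sum fun j _ => by finiteness]
  simp only [ENNReal.toReal_mul, ENNReal.toReal_pow]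

lemma sum_choose_mul_pow_div_succ (m : ℕ) (a q : ℝ) :
    ∑ i ∈ Finset.range (m + 1), (m.choose i : ℝ) * a ^ i * q ^ (m - i) / (i + 1)
      = (∑ j ∈ Finset.range (m + 1), (q + a) ^ j * q ^ (m - j)) / (m + 1) := by
  rcases eq_or_ne a 0 with rfl | ha
  · have : ∀ j ∈ Finset.range (m + 1), (q + 0) ^ j * q ^ (m - j) = q ^ m := fun j hj => by
      rw [add_zero, ← pow_add, Nat.add_sub_cancel' (Nat.lt_succ_iff.mp (Finset.mem_range.mp hj))]
    rw [Finset.sum_congr rfl this, Finset.sum_range_succ', Finset.sum_eq_zero fun i _ => by simp]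
    simp only [Nat.choose_zero_right, Nat.cast_one, pow_zero, mul_one, tsub_zero, one_mul,
      CharP.cast_eq_zero, zero_add, div_one, Finset.sum_const, Finset.card_range, nsmul_eq_mul,
      Nat.cast_add]
    field_simp
  · have hbinom : ∑ i ∈ Finset.range (m + 1), ((m + 1).choose (i + 1) : ℝ) * a ^ (i + 1)
        * q ^ (m - i) = (q + a) ^ (m + 1) - q ^ (m + 1) := by
      rw [add_comm q a, add_pow, Finset.sum_range_succ' _ (m + 1)]
      simp only [Nat.choose_zero_right, Nat.cast_one, pow_zero, Nat.sub_zero, mul_one, one_mul,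
        add_sub_cancel_right, Nat.add_sub_add_right]
      exact Finset.sum_congr rfl fun i _ => by ring
    have hgeom := geom_sum₂_mul (q + a) q (m + 1)
    simp only [Nat.add_sub_cancel, add_sub_cancel_left] at hgeom
    rw [eq_div_iff (by positivity), ← mul_left_inj' ha, hgeom, ← hbinom, Finset.sum_mul,
      Finset.sum_mul]
    refine Finset.sum_congr rfl fun i _ => ?_
    have hchoose : ((m + 1 : ℕ) : ℝ) * m.choose i = (m + 1).choose (i + 1) * (i + 1) := by
      exact_mod_cast Nat.add_one_mul_choose_eq m i
    push_cast at hchoose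
    field_simp
    linear_combination a ^ (i + 1) * q ^ (m - i) * hchoose

noncomputable def winDensity (n : ℕ) (F : Measure ℝ) (x : ℝ) : ℝ :=
  ∑ i ∈ Finset.range n,
    ((n - 1).choose i : ℝ) * (F {x}).toReal ^ i * (F (Ico 0 x)).toReal ^ (n - 1 - i)
      / ((i : ℝ) + 1)

lemma winProb_eq_integral (n : ℕ) (G F : Measure ℝ) :
    winProb n G F = ∫ x, winDensity n F x ∂G := rfl

lemma measure_Iic_eq_add (F : Measure ℝ) (x : ℝ) : F (Iic x) = F (Iio x) + F {x} := by
  rw [← Iio_union_right, measure_union (by simp) (measurableSet_singleton x)]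

lemma measure_Iio_eq_measure_Ico {F : Measure ℝ} (h0 : F (Iio 0) = 0) {x : ℝ} (hx : 0 ≤ x) :
    F (Iio x) = F (Ico 0 x) := by
  rw [← Iio_union_Ico_eq_Iio hx, measure_union ((Iio_disjoint_Ici le_rfl).mono_right
    Ico_subset_Ici_self) measurableSet_Ico, h0, zero_add]

lemma winDensity_nonneg (n : ℕ) (F : Measure ℝ) (x : ℝ) : 0 ≤ winDensity n F x :=
  Finset.sum_nonneg fun _ _ => by positivity

lemma measurable_winDensity (n : ℕ) (F : Measure ℝ) [IsFiniteMeasure F] :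
    Measurable (winDensity n F) := by
  have hatom : Measurable fun x => (F {x}).toReal := by
    have : (fun x => (F {x}).toReal) = fun x => (F (Iic x)).toReal - (F (Iio x)).toReal := by
      ext x
      rw [measure_Iic_eq_add, ENNReal.toReal_add (measure_ne_top F _) (measure_ne_top F _)]
      ring
    rw [this]
    exact (measurable_measure_Iic F).ennreal_toReal.sub (measurable_measure_Iio F).ennreal_toReal
  have hIco : Measurable fun x => (F (Ico 0 x)).toReal := Monotone.measurable fun x y h =>
    ENNReal.toReal_mono (measure_ne_top F _) (measure_mono (Ico_subset_Ico_right h))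
  unfold winDensity
  fun_prop

lemma winDensity_le_sum_choose (n : ℕ) (F : Measure ℝ) [IsProbabilityMeasure F] (x : ℝ) :
    winDensity n F x ≤ ∑ i ∈ Finset.range n, ((n - 1).choose i : ℝ) := by
  refine Finset.sum_le_sum fun i _ => ?_
  calc _ ≤ ((n - 1).choose i : ℝ) * 1 ^ i * 1 ^ (n - 1 - i) / 1 := by
        gcongr
        · exact measureReal_le_one
        · exact measureReal_le_one
        · linarith [i.cast_nonneg (α := ℝ)]
    _ = _ := by simp

lemma integrable_winDensity (n : ℕ) (F : Measure ℝ) [IsProbabilityMeasure F] (ν : Measure ℝ)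
    [IsFiniteMeasure ν] : Integrable (winDensity n F) ν :=
  .of_bound (measurable_winDensity n F).aestronglyMeasurable _ <| ae_of_all _ fun x => by
    rw [Real.norm_of_nonneg (winDensity_nonneg n F x)]
    exact winDensity_le_sum_choose n F x

lemma winDensity_eq_of_nonneg {F : Measure ℝ} [IsFiniteMeasure F] (h0 : F (Iio 0) = 0) (m : ℕ)
    {x : ℝ} (hx : 0 ≤ x) : winDensity (m + 1) F x
      = (∑ j ∈ Finset.range (m + 1), (F (Iic x)).toReal ^ j * (F (Iio x)).toReal ^ (m - j))
        / (m + 1) := by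
  rw [winDensity, Nat.add_sub_cancel, sum_choose_mul_pow_div_succ, measure_Iic_eq_add,
    ENNReal.toReal_add (measure_ne_top F _) (measure_ne_top F _), measure_Iio_eq_measure_Ico h0 hx]

lemma winProb_self {F : Measure ℝ} [IsProbabilityMeasure F] (h0 : F (Iio 0) = 0) (m : ℕ) :
    winProb (m + 1) F F = 1 / (m + 1) := by
  have hnonneg : ∀ᵐ x ∂F, 0 ≤ x :=
    (measure_eq_zero_iff_ae_notMem.1 h0).mono fun x hx => not_lt.1 hx
  rw [winProb_eq_integral, integral_congr_ae (hnonneg.mono fun x hx =>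
    winDensity_eq_of_nonneg h0 m hx), integral_div, integral_sum_pow_Iic_mul_pow_Iio]

lemma pow_measure_Ico_le_winDensity (m : ℕ) (F : Measure ℝ) (x : ℝ) :
    (F (Ico 0 x)).toReal ^ m ≤ winDensity (m + 1) F x := by
  have := Finset.single_le_sum (f := fun i => (m.choose i : ℝ) * (F {x}).toReal ^ i
    * (F (Ico 0 x)).toReal ^ (m - i) / ((i : ℝ) + 1)) (fun i _ => by positivity)
    (Finset.mem_range.2 m.succ_pos)
  simpa [winDensity] using this

lemma winDensity_add_le (m : ℕ) (F : Measure ℝ) (x : ℝ) :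
    winDensity (m + 1) F x + m / (m + 1) * (F {x}).toReal ^ m
      ≤ ((F {x}).toReal + (F (Ico 0 x)).toReal) ^ m := by
  set a := (F {x}).toReal
  set q := (F (Ico 0 x)).toReal
  have hbinom : ∑ i ∈ Finset.range m, (m.choose i : ℝ) * a ^ i * q ^ (m - i)
      = (a + q) ^ m - a ^ m := by
    rw [add_pow, Finset.sum_range_succ]
    simp only [Nat.choose_self, Nat.cast_one, Nat.sub_self, pow_zero, mul_one,
      add_sub_cancel_right]
    exact Finset.sum_congr rfl fun i _ => by ring
  have hdiv : ∑ i ∈ Finset.range m, (m.choose i : ℝ) * a ^ i * q ^ (m - i) / (i + 1)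
      ≤ ∑ i ∈ Finset.range m, (m.choose i : ℝ) * a ^ i * q ^ (m - i) :=
    Finset.sum_le_sum fun i _ =>
      div_le_self (by positivity) (by linarith [i.cast_nonneg (α := ℝ)])
  have hlast : a ^ m / (m + 1) + m / (m + 1) * a ^ m = a ^ m := by
    field_simp
    ring
  rw [winDensity, Nat.add_sub_cancel, Finset.sum_range_succ]
  simp only [Nat.choose_self, Nat.cast_one, Nat.sub_self, pow_zero, mul_one, one_mul]
  linarith

lemma winDensity_gap (m : ℕ) (F : Measure ℝ) [IsFiniteMeasure F] {b t : ℝ} (hb : 0 ≤ b)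
    (hbt : b < t) :
    m / (m + 1) * (F {b}).toReal ^ m ≤ winDensity (m + 1) F t - winDensity (m + 1) F b := by
  have hmono : (F {b}).toReal + (F (Ico 0 b)).toReal ≤ (F (Ico 0 t)).toReal := by
    rw [add_comm, ← ENNReal.toReal_add (measure_ne_top _ _) (measure_ne_top _ _),
      ← measure_union (by simp) (measurableSet_singleton b), Ico_union_right hb]
    exact ENNReal.toReal_mono (measure_ne_top _ _) (measure_mono (Icc_subset_Ico_right hbt))
  have := pow_le_pow_left₀ (by positivity) hmono m
  linarith [pow_measure_Ico_le_winDensity m F t, winDensity_add_le m F b]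

noncomputable def deviation (F : Measure ℝ) (b t w : ℝ) : Measure ℝ :=
  ENNReal.ofReal w • (F.restrict {b}ᶜ + F {b} • Measure.dirac t)
    + ENNReal.ofReal (1 - w) • Measure.dirac 0

section deviation

variable (F : Measure ℝ) (b t : ℝ) {w : ℝ}

lemma isProbabilityMeasure_deviation [IsProbabilityMeasure F] (hw0 : 0 ≤ w) (hw1 : w ≤ 1) :
    IsProbabilityMeasure (deviation F b t w) := by
  constructor
  simp only [deviation, Measure.add_apply, Measure.smul_apply, Measure.restrict_apply_univ,
    measure_univ, smul_eq_mul, mul_one]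
  rw [measure_compl (measurableSet_singleton b) (measure_ne_top _ _), measure_univ,
    tsub_add_cancel_of_le prob_le_one, mul_one, ← ENNReal.ofReal_add hw0 (by linarith)]
  simp

lemma deviation_apply_eq_zero {s : Set ℝ} (hs : MeasurableSet s) (hF : F s = 0) (ht : t ∉ s)
    (h0 : (0 : ℝ) ∉ s) : deviation F b t w s = 0 := by
  simp [deviation, Measure.restrict_apply hs, measure_mono_null inter_subset_left hF,
    Measure.dirac_apply' _ hs, ht, h0]

lemma integral_deviation [IsFiniteMeasure F] {f : ℝ → ℝ} (hf : Integrable f F) (hw0 : 0 ≤ w)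
    (hw1 : w ≤ 1) : ∫ x, f x ∂(deviation F b t w)
      = w * (∫ x, f x ∂F + (F {b}).toReal * (f t - f b)) + (1 - w) * f 0 := by
  have hatom : Integrable f (F {b} • Measure.dirac t) :=
    (integrable_dirac (by simp)).smul_measure (by finiteness)
  have hshift : ∫ x, f x ∂(F.restrict {b}ᶜ + F {b} • Measure.dirac t)
      = ∫ x, f x ∂F + (F {b}).toReal * (f t - f b) := by
    rw [integral_add_measure hf.restrict hatom, setIntegral_compl (measurableSet_singleton b) hf,
      integral_singleton, integral_smul_measure, integral_dirac, measureReal_def, smul_eq_mul,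
      smul_eq_mul]
    ring
  rw [deviation, integral_add_measure
      ((hf.restrict.add_measure hatom).smul_measure ENNReal.ofReal_ne_top)
      ((integrable_dirac (by simp)).smul_measure ENNReal.ofReal_ne_top),
    integral_smul_measure, integral_smul_measure, hshift, integral_dirac,
    ENNReal.toReal_ofReal hw0, ENNReal.toReal_ofReal (by linarith), smul_eq_mul, smul_eq_mul]

lemma memM_deviation {μ : ℝ} (hF : MemM μ F) (ht : t ∈ Icc (0 : ℝ) 1) (hw0 : 0 ≤ w)
    (hw1 : w ≤ 1) (hmean : w * (μ + (F {b}).toReal * (t - b)) = μ) :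
    MemM μ (deviation F b t w) := by
  obtain ⟨hprob, hsupp, hFmean⟩ := hF
  have hae : ∀ᵐ x ∂F, x ∈ Icc (0 : ℝ) 1 := mem_ae_iff.2 hsupp
  have hid : Integrable (fun x => x) F :=
    .of_bound measurable_id.aestronglyMeasurable 1 <| hae.mono fun x hx => by
      rw [Real.norm_eq_abs, abs_le]
      exact ⟨by linarith [hx.1], hx.2⟩
  refine ⟨isProbabilityMeasure_deviation F b t hw0 hw1,
    deviation_apply_eq_zero F b t measurableSet_Icc.compl hsupp (not_not.2 ht) (by simp), ?_⟩
  rw [integral_deviation F b t hid hw0 hw1, hFmean]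
  linear_combination hmean

lemma winProb_deviation_ge [IsProbabilityMeasure F] (h0 : F (Iio 0) = 0) (m : ℕ) (hb : 0 ≤ b)
    (hbt : b < t) (hw0 : 0 ≤ w) (hw1 : w ≤ 1) :
    w * (1 / (m + 1) + (F {b}).toReal * (m / (m + 1) * (F {b}).toReal ^ m))
      ≤ winProb (m + 1) (deviation F b t w) F := by
  rw [winProb_eq_integral, integral_deviation F b t (integrable_winDensity _ F F) hw0 hw1,
    ← winProb_eq_integral, winProb_self h0]
  exact le_add_of_le_of_nonneg (by gcongr; exact winDensity_gap m F hb hbt)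
    (mul_nonneg (by linarith) (winDensity_nonneg _ _ _))

end deviation

theorem stmt_8_general (n : ℕ) (hn : 2 ≤ n) (μ : ℝ) (hμ : 0 < μ)
    (F : Measure ℝ) (hF : MemM μ F)
    (b : ℝ) (hb : b ∈ Set.Ico (0:ℝ) 1) (hatom : 0 < F {b}) :
    ∃ G : Measure ℝ, MemM μ G ∧ 1 / (n : ℝ) < winProb n G F := by
  obtain ⟨m, rfl⟩ : ∃ m, n = m + 1 := ⟨n - 1, by omega⟩
  have : IsProbabilityMeasure F := hF.1
  have hm : (0 : ℝ) < m := by exact_mod_cast (by omega : 0 < m)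
  set a := (F {b}).toReal
  have ha : 0 < a := ENNReal.toReal_pos hatom.ne' (measure_ne_top F _)
  -- the deviation pays off as soon as `ε < μ m a^m`
  set ε := min (1 - b) (μ * m * a ^ m / 2)
  have hε : 0 < ε := lt_min (by linarith [hb.2]) (by positivity)
  have hεμ : ε < μ * m * a ^ m :=
    (min_le_right _ _).trans_lt (half_lt_self (by positivity))
  set w := μ / (μ + a * ε)
  have hw1 : w ≤ 1 := div_le_one_of_le₀ (by linarith [mul_pos ha hε]) (by positivity)
  have ht : b + ε ∈ Icc (0 : ℝ) 1 :=
    ⟨by linarith [hb.1], by linarith [min_le_left (1 - b) (μ * m * a ^ m / 2)]⟩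
  refine ⟨deviation F b (b + ε) w,
    memM_deviation F b (b + ε) hF ht (by positivity) hw1 ?_, ?_⟩
  · rw [add_sub_cancel_left]
    exact div_mul_cancel₀ _ (by positivity)
  have hF0 : F (Iio 0) = 0 :=
    measure_mono_null (fun x (hx : x < 0) (h : x ∈ Icc 0 1) => hx.not_ge h.1) hF.2.1
  refine lt_of_lt_of_le ?_ (winProb_deviation_ge F b (b + ε) hF0 m hb.1
    (lt_add_of_pos_right b hε) (by positivity) hw1)
  have h := div_lt_div_of_pos_right (mul_lt_mul_of_pos_left hεμ ha)
    (by positivity : (0 : ℝ) < m + 1)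
  push_cast
  rw [div_mul_eq_mul_div, lt_div_iff₀ (by positivity)]
  linear_combination h

/-- If `F ∈ M(μ)` has an atom at some `b ∈ [0,1)`, then `F` is not a symmetric
equilibrium of the frictionless game: some `G ∈ M(μ)` wins with probability `> 1/n`. -/
theorem stmt_8 (n : ℕ) (hn : 2 ≤ n) (μ : ℝ) (hμ : 0 < μ) (hμ1 : μ < 1)
    (F : Measure ℝ) (hF : MemM μ F)
    (b : ℝ) (hb : b ∈ Set.Ico (0:ℝ) 1) (hatom : 0 < F {b}) :
    ∃ G : Measure ℝ, MemM μ G ∧ 1 / (n : ℝ) < winProb n G F :=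
  stmt_8_general n hn μ hμ F hF b hb hatom
end

section
/- Let n ≥ 2 be an integer and μ ∈ (0,1). If F ∈ M(μ) is supported on finitely many points, then F is not a symmetric equilibrium of the frictionless game: there exists G ∈ M(μ) with u_n(G,F) > 1/n. -/
open MeasureTheory

/-!
Against a finitely supported `F`, a point `x` carrying an atom `q` of `F` with mass `c` strictly
below it wins with probability `((c + q)^n - c^n) / (n q)`, while a point just above
it, in the gap before the next atom, wins with probability `(c + q)^(n-1)`, which is strictly
larger when `q > 0` and `n ≥ 2`. Pushing every atom below `1` into the gap above it therefore
turns the value `1/n` of `F` against itself (a telescoping sum) into some `W > 1/n`; since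
`μ < 1`, some atom of positive mass lies below `1`. The push raises the mean by an arbitrarily
small amount, which is undone by mixing in a small point mass at `0`.
-/

open Finset Set Filter Topology
open scoped ENNReal

noncomputable def tieWin (n : ℕ) (q c : ℝ) : ℝ :=
  ∑ i ∈ range n, ((n - 1).choose i : ℝ) * q ^ i * c ^ (n - 1 - i) / ((i : ℝ) + 1)

noncomputable def winValue (n : ℕ) (F : Measure ℝ) (x : ℝ) : ℝ :=
  tieWin n (F.real {x}) (F.real (Ico 0 x))

lemma winProb_eq_integral_winValue (n : ℕ) (G F : Measure ℝ) :
    winProb n G F = ∫ x, winValue n F x ∂G := rfl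

section tieWin

variable {n : ℕ} {q c : ℝ}

lemma tieWin_zero_left (hn : n ≠ 0) (c : ℝ) : tieWin n 0 c = c ^ (n - 1) := by
  rw [tieWin, sum_eq_single_of_mem 0 (mem_range.2 (Nat.pos_of_ne_zero hn))
    fun i _ hi => by simp [zero_pow hi]]
  simp

lemma tieWin_nonneg (hq : 0 ≤ q) (hc : 0 ≤ c) : 0 ≤ tieWin n q c :=
  sum_nonneg fun _ _ => by positivity

lemma mul_tieWin (hn : n ≠ 0) (q c : ℝ) : n * q * tieWin n q c = (c + q) ^ n - c ^ n := by
  obtain ⟨m, rfl⟩ := Nat.exists_eq_succ_of_ne_zero hn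
  rw [add_comm c, add_pow, sum_range_succ', tieWin, mul_sum]
  simp only [Nat.succ_sub_one, pow_zero, one_mul, Nat.sub_zero, Nat.choose_zero_right,
    Nat.cast_one, mul_one, add_sub_cancel_right]
  refine sum_congr rfl fun i _ => ?_
  have hpascal : ((m + 1 : ℕ) : ℝ) * m.choose i = (m + 1).choose (i + 1) * ((i : ℝ) + 1) := by
    exact_mod_cast Nat.add_one_mul_choose_eq m i
  rw [Nat.succ_sub_succ]
  field_simp
  linear_combination q ^ (i + 1) * c ^ (m - i) * hpascal

lemma add_pow_pred_eq_sum (hn : n ≠ 0) (q c : ℝ) : (c + q) ^ (n - 1) =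
    ∑ i ∈ range n, ((n - 1).choose i : ℝ) * q ^ i * c ^ (n - 1 - i) := by
  rw [add_comm, add_pow, Nat.sub_add_cancel (Nat.one_le_iff_ne_zero.2 hn)]
  exact sum_congr rfl fun i _ => by ring

lemma tieWin_le_pow (hn : n ≠ 0) (hq : 0 ≤ q) (hc : 0 ≤ c) :
    tieWin n q c ≤ (c + q) ^ (n - 1) := by
  rw [add_pow_pred_eq_sum hn, tieWin]
  exact sum_le_sum fun i _ => div_le_self (by positivity) (by linarith [i.cast_nonneg (α := ℝ)])

lemma tieWin_lt_pow (hn : 2 ≤ n) (hq : 0 < q) (hc : 0 ≤ c) :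
    tieWin n q c < (c + q) ^ (n - 1) := by
  rw [add_pow_pred_eq_sum (by omega), tieWin]
  refine sum_lt_sum (fun i _ => div_le_self (by positivity) (by linarith [i.cast_nonneg (α := ℝ)]))
    ⟨n - 1, mem_range.2 (by omega), ?_⟩
  rw [Nat.choose_self, Nat.sub_self, pow_zero, Nat.cast_one, one_mul, mul_one]
  exact div_lt_self (by positivity) (by norm_cast; omega)

end tieWin

lemma Finset.sum_telescope_filter_lt {α β γ : Type*} [LinearOrder α] [AddCommMonoid β]
    [AddCommGroup γ] (T : Finset α) (p : α → β) (φ : β → γ) :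
    ∑ b ∈ T, (φ (∑ c ∈ T with c < b, p c + p b) - φ (∑ c ∈ T with c < b, p c)) =
      φ (∑ c ∈ T, p c) - φ 0 := by
  induction T using Finset.induction_on_max with
  | empty => simp
  | insert a s ha ih =>
    have has : a ∉ s := fun h => (ha a h).false
    have hlt_a : ({c ∈ insert a s | c < a} : Finset α) = s := by
      rw [filter_insert, if_neg (lt_irrefl a), filter_true_of_mem ha]
    have hlt_b : ∀ b ∈ s, ({c ∈ insert a s | c < b} : Finset α) = {c ∈ s | c < b} :=
      fun b hb => by rw [filter_insert, if_neg (ha b hb).not_gt]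
    have hs : ∑ b ∈ s, (φ (∑ c ∈ insert a s with c < b, p c + p b) -
        φ (∑ c ∈ insert a s with c < b, p c)) = φ (∑ c ∈ s, p c) - φ 0 := by
      rw [← ih]; exact sum_congr rfl fun b hb => by rw [hlt_b b hb]
    rw [sum_insert has, hlt_a, hs, sum_insert has, add_comm (p a)]
    abel

lemma Finset.eventually_add_lt (T : Finset ℝ) :
    ∀ᶠ s in 𝓝 (0 : ℝ), ∀ b ∈ T, ∀ c ∈ T, b < c → b + s < c := by
  simp only [eventually_all_finset]
  intro b _ c _
  by_cases hbc : b < c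
  · filter_upwards [eventually_lt_nhds (sub_pos.2 hbc)] with s hs _ using by linarith
  · exact .of_forall fun _ h => absurd h hbc

section DiracCombination

variable {α ι : Type*} [MeasurableSpace α] [MeasurableSingletonClass α]
  (s : Finset ι) (w : ι → ℝ≥0∞) (y : ι → α)

lemma integrable_sum_smul_dirac (hw : ∀ i ∈ s, w i ≠ ∞) (f : α → ℝ) :
    Integrable f (∑ i ∈ s, w i • Measure.dirac (y i)) :=
  integrable_finsetSum_measure.2 fun i hi =>
    (integrable_dirac enorm_lt_top).smul_measure (hw i hi)

lemma integral_sum_smul_dirac (hw : ∀ i ∈ s, w i ≠ ∞) (f : α → ℝ) :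
    ∫ x, f x ∂(∑ i ∈ s, w i • Measure.dirac (y i)) = ∑ i ∈ s, (w i).toReal * f (y i) := by
  rw [integral_finsetSum_measure fun i hi =>
    (integrable_dirac enorm_lt_top).smul_measure (hw i hi)]
  exact sum_congr rfl fun i _ => by rw [integral_smul_measure, integral_dirac, smul_eq_mul]

end DiracCombination

lemma memM_sum_smul_dirac {ι : Type*} (s : Finset ι) (w : ι → ℝ≥0∞) (y : ι → ℝ)
    (hw : ∑ i ∈ s, w i = 1) (hy : ∀ i ∈ s, y i ∈ Set.Icc 0 1) :
    MemM (∑ i ∈ s, (w i).toReal * y i) (∑ i ∈ s, w i • Measure.dirac (y i)) := by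
  have hw_top : ∀ i ∈ s, w i ≠ ∞ := fun i hi =>
    ne_top_of_le_ne_top ENNReal.one_ne_top (hw ▸ single_le_sum (fun _ _ => bot_le) hi)
  refine ⟨⟨?_⟩, ?_, integral_sum_smul_dirac s w y hw_top id⟩
  · simp [Measure.finsetSum_apply, hw]
  · rw [Measure.finsetSum_apply]
    exact sum_eq_zero fun i hi => by simp [hy i hi]

section FiniteSupport

variable {α : Type*} [MeasurableSpace α] [MeasurableSingletonClass α] {F : Measure α}
  {T : Finset α}

lemma measure_eq_sum_filter_of_compl_null (hT : F (↑T)ᶜ = 0) (A : Set α)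
    [DecidablePred (· ∈ A)] : F A = ∑ b ∈ T with b ∈ A, F {b} := by
  rw [← measure_inter_conull hT, sum_measure_singleton, coe_filter]
  congr 1
  ext
  simp [and_comm]

lemma measureReal_eq_sum_filter_of_compl_null [IsFiniteMeasure F] (hT : F (↑T)ᶜ = 0)
    (A : Set α) [DecidablePred (· ∈ A)] : F.real A = ∑ b ∈ T with b ∈ A, F.real {b} := by
  rw [sum_measureReal_singleton, measureReal_def, measure_eq_sum_filter_of_compl_null hT,
    sum_measure_singleton, measureReal_def]

lemma eq_sum_smul_dirac_of_compl_null (hT : F (↑T)ᶜ = 0) :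
    F = ∑ b ∈ T, F {b} • Measure.dirac b := by
  classical
  ext A hA
  rw [measure_eq_sum_filter_of_compl_null hT A, Measure.finsetSum_apply, sum_filter]
  exact sum_congr rfl fun b _ => by by_cases hb : b ∈ A <;> simp [hb, Measure.dirac_apply' _ hA]

lemma integral_eq_sum_of_compl_null [IsFiniteMeasure F] (hT : F (↑T)ᶜ = 0) (f : α → ℝ) :
    ∫ x, f x ∂F = ∑ b ∈ T, F.real {b} * f b := by
  conv_lhs => rw [eq_sum_smul_dirac_of_compl_null hT]
  exact integral_sum_smul_dirac T _ id (fun _ _ => measure_ne_top _ _) f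

lemma sum_measure_singleton_eq_one [IsProbabilityMeasure F] (hT : F (↑T)ᶜ = 0) :
    ∑ b ∈ T, F {b} = 1 := by
  rw [sum_measure_singleton, ← prob_compl_eq_zero_iff T.measurableSet, hT]

lemma sum_measureReal_singleton_eq_one [IsProbabilityMeasure F] (hT : F (↑T)ᶜ = 0) :
    ∑ b ∈ T, F.real {b} = 1 := by
  rw [sum_measureReal_singleton, measureReal_def, ← sum_measure_singleton,
    sum_measure_singleton_eq_one hT, ENNReal.toReal_one]

end FiniteSupport

lemma winValue_nonneg (n : ℕ) (F : Measure ℝ) (x : ℝ) : 0 ≤ winValue n F x :=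
  tieWin_nonneg measureReal_nonneg measureReal_nonneg

noncomputable def mixWithZero (t : ℝ) (G : Measure ℝ) : Measure ℝ :=
  ENNReal.ofReal t • G + ENNReal.ofReal (1 - t) • Measure.dirac 0

section MixWithZero

variable {t : ℝ} {G : Measure ℝ}

lemma integral_mixWithZero (ht0 : 0 ≤ t) (ht1 : t ≤ 1) {f : ℝ → ℝ} (hf : Integrable f G) :
    ∫ x, f x ∂(mixWithZero t G) = t * ∫ x, f x ∂G + (1 - t) * f 0 := by
  rw [mixWithZero, integral_add_measure (hf.smul_measure ENNReal.ofReal_ne_top)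
      ((integrable_dirac enorm_lt_top).smul_measure ENNReal.ofReal_ne_top),
    integral_smul_measure, integral_smul_measure, integral_dirac, ENNReal.toReal_ofReal ht0,
    ENNReal.toReal_ofReal (sub_nonneg.2 ht1), smul_eq_mul, smul_eq_mul]

lemma MemM.integrable_id {μ : ℝ} (h : MemM μ G) : Integrable (fun x => x) G := by
  have := h.1
  refine .of_bound measurable_id.aestronglyMeasurable 1 ?_
  filter_upwards [mem_ae_iff.2 h.2.1] with x hx
  rw [Real.norm_eq_abs, abs_le]
  exact ⟨by linarith [hx.1], hx.2⟩

lemma MemM.mixWithZero {μ ν : ℝ} (h : MemM ν G) (hμ : 0 ≤ μ) (hμν : μ ≤ ν) (hν : 0 < ν) :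
    MemM μ (mixWithZero (μ / ν) G) := by
  have ht0 : 0 ≤ μ / ν := div_nonneg hμ hν.le
  have ht1 : μ / ν ≤ 1 := div_le_one_of_le₀ hμν hν.le
  have := h.1
  refine ⟨⟨?_⟩, ?_, ?_⟩
  · simp [_root_.mixWithZero, ← ENNReal.ofReal_add ht0 (sub_nonneg.2 ht1)]
  · simp [_root_.mixWithZero, h.2.1]
  · rw [integral_mixWithZero ht0 ht1 h.integrable_id, h.2.2]
    field_simp
    ring

lemma le_winProb_mixWithZero (ht0 : 0 ≤ t) (ht1 : t ≤ 1) {n : ℕ} {F : Measure ℝ}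
    (hG : Integrable (winValue n F) G) : t * winProb n G F ≤ winProb n (mixWithZero t G) F := by
  rw [winProb_eq_integral_winValue, winProb_eq_integral_winValue, integral_mixWithZero ht0 ht1 hG]
  exact le_add_of_nonneg_right (mul_nonneg (sub_nonneg.2 ht1) (winValue_nonneg n F 0))

end MixWithZero

section FiniteSupportReal

variable {F : Measure ℝ} {T : Finset ℝ} {n : ℕ}

lemma measureReal_Ico_eq_sum [IsFiniteMeasure F] (hT : F (↑T)ᶜ = 0) (hT0 : ∀ b ∈ T, 0 ≤ b)
    (x : ℝ) : F.real (Ico 0 x) = ∑ c ∈ T with c < x, F.real {c} := by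
  classical
  rw [measureReal_eq_sum_filter_of_compl_null hT]
  exact sum_congr (filter_congr fun c hc => by simp [hT0 c hc]) fun _ _ => rfl

lemma winProb_self_s9 [IsProbabilityMeasure F] (hn : n ≠ 0) (hT : F (↑T)ᶜ = 0)
    (hT0 : ∀ b ∈ T, 0 ≤ b) : winProb n F F = 1 / n := by
  have hsummand : ∀ b, F.real {b} * winValue n F b =
      ((∑ c ∈ T with c < b, F.real {c} + F.real {b}) ^ n -
        (∑ c ∈ T with c < b, F.real {c}) ^ n) / n := by
    intro b
    rw [winValue, measureReal_Ico_eq_sum hT hT0, eq_div_iff (by positivity), ← mul_tieWin hn]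
    ring
  rw [winProb_eq_integral_winValue, integral_eq_sum_of_compl_null hT,
    sum_congr rfl fun b _ => hsummand b, ← sum_div,
    sum_telescope_filter_lt T (fun b => F.real {b}) (· ^ n), sum_measureReal_singleton_eq_one hT]
  simp [hn]

lemma exists_mem_lt_one_measureReal_pos [IsProbabilityMeasure F] (hT : F (↑T)ᶜ = 0)
    (hmean : ∫ x, x ∂F < 1) : ∃ b ∈ T, b < 1 ∧ 0 < F.real {b} := by
  by_contra! h
  refine hmean.not_ge ?_
  calc (1 : ℝ) = ∑ b ∈ T, F.real {b} := (sum_measureReal_singleton_eq_one hT).symm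
    _ ≤ ∑ b ∈ T, F.real {b} * b := sum_le_sum fun b hb => by
      by_cases hb1 : b < 1
      · simp [(h b hb hb1).antisymm measureReal_nonneg]
      · exact le_mul_of_one_le_right measureReal_nonneg (not_lt.1 hb1)
    _ = ∫ x, x ∂F := (integral_eq_sum_of_compl_null hT _).symm

lemma winValue_add_of_gap [IsFiniteMeasure F] (hn : n ≠ 0) (hT : F (↑T)ᶜ = 0)
    (hT0 : ∀ b ∈ T, 0 ≤ b) {b s : ℝ} (hb : b ∈ T) (hs : 0 < s)
    (hgap : ∀ c ∈ T, b < c → b + s < c) :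
    winValue n F (b + s) = (F.real (Ico 0 b) + F.real {b}) ^ (n - 1) := by
  classical
  have hnot : b + s ∉ T := fun h => (hgap _ h (by linarith)).false
  have hatom : F.real {b + s} = 0 :=
    (measureReal_eq_zero_iff).2 (measure_mono_null (by simpa using hnot) hT)
  have hbelow : ({c ∈ T | c < b + s} : Finset ℝ) = insert b {c ∈ T | c < b} := by
    ext c
    simp only [mem_filter, Finset.mem_insert]
    constructor
    · rintro ⟨hc, hcs⟩
      rcases lt_trichotomy c b with h | rfl | h
      · exact .inr ⟨hc, h⟩
      · exact .inl rfl
      · exact absurd (hgap c hc h) hcs.not_gt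
    · rintro (rfl | ⟨hc, h⟩)
      · exact ⟨hb, by linarith⟩
      · exact ⟨hc, by linarith⟩
  rw [winValue, hatom, tieWin_zero_left hn, measureReal_Ico_eq_sum hT hT0, hbelow,
    sum_insert (by simp), measureReal_Ico_eq_sum hT hT0, add_comm (F.real {b})]

end FiniteSupportReal

/-- The win probability just above the atom `b`; an atom at `1` has no room to move and stays. -/
noncomputable def pushedWinValue (n : ℕ) (F : Measure ℝ) (b : ℝ) : ℝ :=
  if b < 1 then (F.real (Ico 0 b) + F.real {b}) ^ (n - 1) else winValue n F b

section Push

variable {F : Measure ℝ} [IsProbabilityMeasure F] {T : Finset ℝ} {n : ℕ}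

lemma one_div_lt_sum_pushedWinValue (hn : 2 ≤ n) (hT : F (↑T)ᶜ = 0) (hT0 : ∀ b ∈ T, 0 ≤ b)
    {b₀ : ℝ} (hb₀ : b₀ ∈ T) (hb₀1 : b₀ < 1) (hpos : 0 < F.real {b₀}) :
    1 / (n : ℝ) < ∑ b ∈ T, F.real {b} * pushedWinValue n F b := by
  rw [← winProb_self_s9 (by omega) hT hT0, winProb_eq_integral_winValue,
    integral_eq_sum_of_compl_null hT]
  refine sum_lt_sum (fun b _ => ?_) ⟨b₀, hb₀, ?_⟩
  · rw [pushedWinValue]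
    split_ifs
    · exact mul_le_mul_of_nonneg_left
        (tieWin_le_pow (by omega) measureReal_nonneg measureReal_nonneg) measureReal_nonneg
    · exact le_rfl
  · rw [pushedWinValue, if_pos hb₀1]
    exact mul_lt_mul_of_pos_left (tieWin_lt_pow hn hpos measureReal_nonneg) hpos

lemma eventually_exists_pushed_measure (hn : n ≠ 0) (hT : F (↑T)ᶜ = 0)
    (hT01 : ∀ b ∈ T, b ∈ Set.Icc 0 1) :
    ∀ᶠ s in 𝓝[>] 0, ∃ G₀, MemM (∫ x, x ∂F + s * F.real (Iio 1)) G₀ ∧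
      Integrable (winValue n F) G₀ ∧
      winProb n G₀ F = ∑ b ∈ T, F.real {b} * pushedWinValue n F b := by
  classical
  have hT0 : ∀ b ∈ T, 0 ≤ b := fun b hb => (hT01 b hb).1
  filter_upwards [nhdsWithin_le_nhds (insert 1 T).eventually_add_lt, self_mem_nhdsWithin]
    with s hgap (hs : 0 < s)
  have hgapT : ∀ b ∈ T, ∀ c ∈ T, b < c → b + s < c := fun b hb c hc =>
    hgap b (mem_insert_of_mem hb) c (mem_insert_of_mem hc)
  set σ : ℝ → ℝ := fun b => if b < 1 then b + s else b
  have hσ01 : ∀ b ∈ T, σ b ∈ Set.Icc 0 1 := by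
    intro b hb
    by_cases hb1 : b < 1
    · have := hgap b (mem_insert_of_mem hb) 1 (mem_insert_self 1 T) hb1
      simp only [σ, if_pos hb1]
      exact ⟨by linarith [hT0 b hb], this.le⟩
    · simpa [σ, hb1] using hT01 b hb
  refine ⟨∑ b ∈ T, F {b} • Measure.dirac (σ b), ?_,
    integrable_sum_smul_dirac T _ σ (fun _ _ => measure_ne_top _ _) _, ?_⟩
  · convert memM_sum_smul_dirac T _ σ (sum_measure_singleton_eq_one hT) hσ01 using 1
    rw [integral_eq_sum_of_compl_null hT, measureReal_eq_sum_filter_of_compl_null hT, mul_sum,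
      sum_filter, ← sum_add_distrib]
    refine sum_congr rfl fun b _ => ?_
    by_cases hb1 : b < 1
    · simp only [σ, Set.mem_Iio, if_pos hb1, measureReal_def]
      ring
    · simp only [σ, Set.mem_Iio, if_neg hb1, measureReal_def, add_zero]
  · rw [winProb_eq_integral_winValue, integral_sum_smul_dirac T _ σ (fun _ _ => measure_ne_top _ _)]
    refine sum_congr rfl fun b hb => ?_
    by_cases hb1 : b < 1
    · simp only [σ, pushedWinValue, if_pos hb1, winValue_add_of_gap hn hT hT0 hb hs (hgapT b hb)]
      rfl
    · simp only [σ, pushedWinValue, if_neg hb1]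
      rfl

end Push

lemma exists_memM_one_div_lt_winProb {n : ℕ} (hn : n ≠ 0) {F : Measure ℝ} {μ P W : ℝ}
    (hμ : 0 < μ) (hP : 0 ≤ P) (hW : 1 / (n : ℝ) < W)
    (h : ∀ᶠ s in 𝓝[>] 0, ∃ G₀, MemM (μ + s * P) G₀ ∧ Integrable (winValue n F) G₀ ∧
      winProb n G₀ F = W) :
    ∃ G : Measure ℝ, MemM μ G ∧ 1 / (n : ℝ) < winProb n G F := by
  have hgain : 0 < μ * (n * W - 1) :=
    mul_pos hμ (sub_pos.2 ((div_lt_iff₀' (by positivity)).1 hW))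
  have hsmall : ∀ᶠ s in 𝓝[>] 0, s * P < μ * (n * W - 1) :=
    nhdsWithin_le_nhds <| (continuous_id.mul continuous_const).tendsto' 0 0 (zero_mul _)
      |>.eventually (gt_mem_nhds hgain)
  obtain ⟨s, ⟨G₀, hG₀, hG₀int, hG₀win⟩, hs_small, hs_pos⟩ :=
    (h.and (hsmall.and self_mem_nhdsWithin)).exists
  set ν := μ + s * P
  have hμν : μ ≤ ν := le_add_of_nonneg_right (mul_nonneg (le_of_lt hs_pos) hP)
  have hν : 0 < ν := hμ.trans_le hμν
  refine ⟨mixWithZero (μ / ν) G₀, hG₀.mixWithZero hμ.le hμν hν, ?_⟩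
  calc 1 / (n : ℝ) < μ / ν * winProb n G₀ F := by
        rw [hG₀win, div_mul_eq_mul_div, lt_div_iff₀ hν, one_div_mul_eq_div,
          div_lt_iff₀ (by positivity)]
        linarith
    _ ≤ winProb n (mixWithZero (μ / ν) G₀) F :=
        le_winProb_mixWithZero (div_nonneg hμ.le hν.le) (div_le_one_of_le₀ hμν hν.le) hG₀int

/-- If `F ∈ M(μ)` is supported on finitely many points, then `F` is not a
symmetric equilibrium of the frictionless game. -/
theorem stmt_9 (n : ℕ) (hn : 2 ≤ n) (μ : ℝ) (hμ : 0 < μ) (hμ1 : μ < 1)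
    (F : Measure ℝ) (hF : MemM μ F)
    (S : Finset ℝ) (hfin : F ((S : Set ℝ))ᶜ = 0) :
    ∃ G : Measure ℝ, MemM μ G ∧ 1 / (n : ℝ) < winProb n G F := by
  classical
  obtain ⟨hFprob, hF01, hFmean⟩ := hF
  set T : Finset ℝ := {b ∈ S | b ∈ Set.Icc 0 1}
  have hT : F (↑T)ᶜ = 0 :=
    measure_mono_null (fun x hx => by by_cases x ∈ S <;> simp_all [T]) (measure_union_null hfin hF01)
  have hT01 : ∀ b ∈ T, b ∈ Set.Icc 0 1 := fun b hb => (mem_filter.1 hb).2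
  obtain ⟨b₀, hb₀, hb₀1, hpos⟩ := exists_mem_lt_one_measureReal_pos hT (hFmean ▸ hμ1)
  have hpush := eventually_exists_pushed_measure (n := n) (by omega) hT hT01
  rw [hFmean] at hpush
  exact exists_memM_one_div_lt_winProb (by omega) hμ measureReal_nonneg
    (one_div_lt_sum_pushedWinValue hn hT (fun b hb => (hT01 b hb).1) hb₀ hb₀1 hpos) hpush
end

section
/- Let n ≥ 2 be an integer and μ ∈ [1/n, 1), and let F* be the associated equilibrium measure: F* has an atom of mass a at 1 and cumulative distribution function F*(x) = (1-a)(x/s)^{1/(n-1)} for x ∈ [0,s], where a ∈ [0,μ) satisfies a = μ(1-(1-a)^n) and s = nμ(1-a)^{n-1}. Then F* is a symmetric equilibrium of the frictionless game: for every G ∈ M(μ), u_n(G,F*) ≤ 1/n. -/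
/-!
Against `F*`, a draw at `x ∈ [0,1]` wins with probability at most `x / (nμ)`. Below `1` the
tie-broken win probability is at most `F*([0,x])^(n-1)`, which equals `x / (nμ)` on `[0,s]`
and the constant `(1-a)^(n-1) = s / (nμ)` on `[s,1)`. At the atom `1` the win probability is
exactly `(1 - (1-a)^n) / (n a)`, which is `1 / (nμ)` by the equation defining `a` (when
`a = 0`, the cdf forces `nμ = s ≤ 1`). Integrating this bound against any `G` of mean `μ`
gives `u_n(G, F*) ≤ μ / (nμ) = 1/n`.
-/

open MeasureTheory

open Set

/-- Probability that a draw beats `m` independent opponents, each of whom ties it with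
probability `p` and lies strictly below it with probability `q`, ties broken uniformly. -/
noncomputable def tieWinProb (m : ℕ) (p q : ℝ) : ℝ :=
  ∑ i ∈ Finset.range (m + 1), (m.choose i : ℝ) * p ^ i * q ^ (m - i) / ((i : ℝ) + 1)

lemma winProb_succ (m : ℕ) (G F : Measure ℝ) :
    winProb (m + 1) G F = ∫ x, tieWinProb m (F {x}).toReal (F (Ico 0 x)).toReal ∂G := by
  simp only [winProb, tieWinProb, Nat.add_sub_cancel]

lemma tieWinProb_le_add_pow {m : ℕ} {p q : ℝ} (hp : 0 ≤ p) (hq : 0 ≤ q) :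
    tieWinProb m p q ≤ (p + q) ^ m := by
  rw [tieWinProb, add_pow]
  refine Finset.sum_le_sum fun i _ => ?_
  calc (m.choose i : ℝ) * p ^ i * q ^ (m - i) / ((i : ℝ) + 1)
      ≤ (m.choose i : ℝ) * p ^ i * q ^ (m - i) :=
        div_le_self (by positivity) (by linarith [i.cast_nonneg (α := ℝ)])
    _ = p ^ i * q ^ (m - i) * (m.choose i : ℝ) := by ring

/-- The identity `(m+1)/(i+1) · C(m,i) = C(m+1,i+1)` turns the sum into a binomial expansion. -/
lemma succ_mul_mul_tieWinProb (m : ℕ) (p q : ℝ) :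
    ((m : ℝ) + 1) * p * tieWinProb m p q = (p + q) ^ (m + 1) - q ^ (m + 1) := by
  have hterm : ∀ i ∈ Finset.range (m + 1),
      ((m : ℝ) + 1) * p * ((m.choose i : ℝ) * p ^ i * q ^ (m - i) / ((i : ℝ) + 1)) =
        p ^ (i + 1) * q ^ (m + 1 - (i + 1)) * ((m + 1).choose (i + 1) : ℝ) := by
    intro i _
    have hchoose : ((m : ℝ) + 1) * m.choose i = (m + 1).choose (i + 1) * ((i : ℝ) + 1) := by
      exact_mod_cast Nat.add_one_mul_choose_eq m i
    rw [Nat.add_sub_add_right]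
    field_simp
    linear_combination p ^ (i + 1) * q ^ (m - i) * hchoose
  rw [tieWinProb, Finset.mul_sum, Finset.sum_congr rfl hterm, add_pow,
    Finset.sum_range_succ' (fun j => p ^ j * q ^ (m + 1 - j) * ((m + 1).choose j : ℝ)) (m + 1)]
  simp

section Measures

variable {F : Measure ℝ}

lemma toReal_measure_singleton_add_Ico [IsFiniteMeasure F] {x : ℝ} (hx : 0 ≤ x) :
    (F {x}).toReal + (F (Ico 0 x)).toReal = (F (Icc 0 x)).toReal := by
  rw [← Ico_union_right hx, measure_union (by simp) (measurableSet_singleton x),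
    ENNReal.toReal_add (measure_ne_top _ _) (measure_ne_top _ _), add_comm]

lemma tieWinProb_le_cdf_pow [IsFiniteMeasure F] (m : ℕ) {x : ℝ} (hx : 0 ≤ x) :
    tieWinProb m (F {x}).toReal (F (Ico 0 x)).toReal ≤ (F (Iic x)).toReal ^ m := by
  refine (tieWinProb_le_add_pow ENNReal.toReal_nonneg ENNReal.toReal_nonneg).trans ?_
  rw [toReal_measure_singleton_add_Ico hx]
  exact pow_le_pow_left₀ ENNReal.toReal_nonneg (measureReal_mono Icc_subset_Iic_self) m

variable [IsProbabilityMeasure F]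

lemma toReal_measure_Iic_one (hsupp : F (Icc 0 1)ᶜ = 0) : (F (Iic 1)).toReal = 1 := by
  have hIcc : F (Icc 0 1) = 1 := (prob_compl_eq_zero_iff measurableSet_Icc).1 hsupp
  have h : F (Iic 1) = 1 := le_antisymm prob_le_one (hIcc ▸ measure_mono Icc_subset_Iic_self)
  simp [h]

lemma toReal_measure_Ico_zero_one (hsupp : F (Icc 0 1)ᶜ = 0) :
    (F (Ico 0 1)).toReal = 1 - (F {1}).toReal := by
  have h := toReal_measure_singleton_add_Ico (F := F) zero_le_one
  rw [(prob_compl_eq_zero_iff measurableSet_Icc).1 hsupp, ENNReal.toReal_one] at h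
  linarith

end Measures

lemma MemM.integral_le_mul {μ c : ℝ} {G : Measure ℝ} (hG : MemM μ G) (hc : 0 ≤ c) {φ : ℝ → ℝ}
    (hφ : ∀ x ∈ Icc 0 1, φ x ≤ c * x) : ∫ x, φ x ∂G ≤ c * μ := by
  obtain ⟨hprob, hsupp, hmean⟩ := hG
  have hae : ∀ᵐ x ∂G, x ∈ Icc (0 : ℝ) 1 := ae_iff.2 hsupp
  have hid : Integrable (fun x : ℝ => x) G := by
    refine Integrable.of_bound (by fun_prop) 1 (hae.mono fun x hx => ?_)
    rw [Real.norm_eq_abs, abs_of_nonneg hx.1]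
    exact hx.2
  by_cases hφi : Integrable φ G
  · calc ∫ x, φ x ∂G ≤ ∫ x, c * x ∂G := integral_mono_ae hφi (hid.const_mul c) (hae.mono hφ)
      _ = c * μ := by rw [integral_const_mul, hmean]
  · rw [integral_undef hφi, ← hmean]
    exact mul_nonneg hc (integral_nonneg_of_ae (hae.mono fun x hx => hx.1))

section Equilibrium

variable {m : ℕ} {μ a s : ℝ} {F : Measure ℝ}

lemma le_one_of_cdf_eq_rpow [IsProbabilityMeasure F] (hm : m ≠ 0) (ha0 : 0 ≤ a)
    (ha1 : a < 1) (hs : 0 < s) (hsupp : F (Icc 0 1)ᶜ = 0)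
    (hcdf : ∀ x : ℝ, 0 ≤ x → x ≤ s →
      (F (Iic x)).toReal = (1 - a) * (x / s) ^ ((1 : ℝ) / m)) :
    s ≤ 1 := by
  by_contra! h
  have hm' : (0 : ℝ) < m := by exact_mod_cast Nat.pos_of_ne_zero hm
  have hlt : (1 / s) ^ ((1 : ℝ) / m) < 1 :=
    Real.rpow_lt_one (by positivity) ((div_lt_one hs).2 h) (by positivity)
  have h1 := hcdf 1 zero_le_one h.le
  rw [toReal_measure_Iic_one hsupp] at h1
  nlinarith

lemma cdf_pow_le_of_equilibrium (hm : m ≠ 0) (hμ : 0 < μ) (hs0 : 0 < s)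
    (hs : s = ((m : ℝ) + 1) * μ * (1 - a) ^ m)
    (hcdf : ∀ x : ℝ, 0 ≤ x → x ≤ s →
      (F (Iic x)).toReal = (1 - a) * (x / s) ^ ((1 : ℝ) / m))
    (hcdf2 : ∀ x : ℝ, s ≤ x → x < 1 → (F (Iic x)).toReal = 1 - a) {x : ℝ} (hx0 : 0 ≤ x)
    (hx1 : x < 1) :
    (F (Iic x)).toReal ^ m ≤ (((m : ℝ) + 1) * μ)⁻¹ * x := by
  have hslope : (1 - a) ^ m = (((m : ℝ) + 1) * μ)⁻¹ * s := by
    rw [hs]; field_simp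
  rcases le_total x s with hxs | hsx
  · rw [hcdf x hx0 hxs, mul_pow, one_div,
      Real.rpow_inv_natCast_pow (div_nonneg hx0 hs0.le) hm, hslope]
    exact le_of_eq (by field_simp)
  · rw [hcdf2 x hsx hx1, hslope]
    gcongr

lemma tieWinProb_one_le_of_equilibrium (hμ : 0 < μ) (ha0 : 0 ≤ a)
    (haeq : a = μ * (1 - (1 - a) ^ (m + 1))) (hs : s = ((m : ℝ) + 1) * μ * (1 - a) ^ m)
    (hs1 : s ≤ 1) :
    tieWinProb m a (1 - a) ≤ (((m : ℝ) + 1) * μ)⁻¹ := by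
  rcases ha0.eq_or_lt with rfl | ha
  · have hnμ : ((m : ℝ) + 1) * μ ≤ 1 := by simpa [hs] using hs1
    calc tieWinProb m 0 (1 - 0) ≤ (0 + (1 - 0)) ^ m :=
          tieWinProb_le_add_pow le_rfl (by norm_num)
      _ = 1 := by norm_num
      _ ≤ _ := (one_le_inv₀ (by positivity)).2 hnμ
  · have h := succ_mul_mul_tieWinProb m a (1 - a)
    rw [add_sub_cancel, one_pow] at h
    refine le_of_eq (eq_inv_of_mul_eq_one_left (mul_left_cancel₀ ha.ne' ?_))
    linear_combination μ * h - haeq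

lemma tieWinProb_le_of_equilibrium [IsProbabilityMeasure F] (hm : m ≠ 0) (hμ : 0 < μ)
    (ha0 : 0 ≤ a) (ha1 : a < 1) (haeq : a = μ * (1 - (1 - a) ^ (m + 1)))
    (hs : s = ((m : ℝ) + 1) * μ * (1 - a) ^ m) (hsupp : F (Icc 0 1)ᶜ = 0)
    (hatom : (F {1}).toReal = a)
    (hcdf : ∀ x : ℝ, 0 ≤ x → x ≤ s →
      (F (Iic x)).toReal = (1 - a) * (x / s) ^ ((1 : ℝ) / m))
    (hcdf2 : ∀ x : ℝ, s ≤ x → x < 1 → (F (Iic x)).toReal = 1 - a) :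
    ∀ x ∈ Icc (0 : ℝ) 1,
      tieWinProb m (F {x}).toReal (F (Ico 0 x)).toReal ≤ (((m : ℝ) + 1) * μ)⁻¹ * x := by
  have hs0 : 0 < s := by
    have := sub_pos.2 ha1
    rw [hs]; positivity
  rintro x ⟨hx0, hx1⟩
  rcases hx1.lt_or_eq with hx1 | rfl
  · exact (tieWinProb_le_cdf_pow m hx0).trans
      (cdf_pow_le_of_equilibrium hm hμ hs0 hs hcdf hcdf2 hx0 hx1)
  · rw [mul_one, toReal_measure_Ico_zero_one hsupp, hatom]
    exact tieWinProb_one_le_of_equilibrium hμ ha0 haeq hs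
      (le_one_of_cdf_eq_rpow hm ha0 ha1 hs0 hsupp hcdf)

end Equilibrium

theorem stmt_10_general (n : ℕ) (hn : 2 ≤ n) (μ a s : ℝ)
    (hμ1 : μ < 1)
    (ha0 : 0 ≤ a) (haμ : a < μ) (haeq : a = μ * (1 - (1 - a) ^ n))
    (hs : s = (n : ℝ) * μ * (1 - a) ^ (n - 1))
    (Fstar : Measure ℝ) [IsProbabilityMeasure Fstar] (hsupp : Fstar (Set.Icc (0:ℝ) 1)ᶜ = 0)
    (hatom : (Fstar {1}).toReal = a)
    (hcdf : ∀ x : ℝ, 0 ≤ x → x ≤ s →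
      (Fstar (Set.Iic x)).toReal = (1 - a) * (x / s) ^ ((1 : ℝ) / ((n : ℝ) - 1)))
    (hcdf2 : ∀ x : ℝ, s ≤ x → x < 1 → (Fstar (Set.Iic x)).toReal = 1 - a) :
    ∀ G : Measure ℝ, MemM μ G → winProb n G Fstar ≤ 1 / (n : ℝ) := by
  intro G hG
  obtain ⟨m, rfl⟩ : ∃ m, n = m + 1 := ⟨n - 1, by omega⟩
  have hμ : 0 < μ := ha0.trans_lt haμ
  push_cast at hs hcdf ⊢
  simp only [add_sub_cancel_right] at hcdf
  rw [winProb_succ]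
  calc _ ≤ (((m : ℝ) + 1) * μ)⁻¹ * μ :=
        hG.integral_le_mul (by positivity) (tieWinProb_le_of_equilibrium (by omega) hμ ha0
          (haμ.trans hμ1) haeq hs hsupp hatom hcdf hcdf2)
    _ = 1 / ((m : ℝ) + 1) := by field_simp

/-- For `n ≥ 2` and `μ ∈ [1/n,1)`, the measure `F*` with an atom of mass `a`
at `1` (where `a = μ(1-(1-a)^n)`, `a ∈ [0,μ)`) and cdf `(1-a)(x/s)^{1/(n-1)}` on `[0,s]`,
`s = nμ(1-a)^{n-1}`, is a symmetric equilibrium of the frictionless game. -/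
theorem stmt_10 (n : ℕ) (hn : 2 ≤ n) (μ a s : ℝ)
    (hμn : 1 / (n : ℝ) ≤ μ) (hμ1 : μ < 1)
    (ha0 : 0 ≤ a) (haμ : a < μ) (haeq : a = μ * (1 - (1 - a) ^ n))
    (hs : s = (n : ℝ) * μ * (1 - a) ^ (n - 1))
    (Fstar : Measure ℝ) [IsProbabilityMeasure Fstar] (hsupp : Fstar (Set.Icc (0:ℝ) 1)ᶜ = 0)
    (hatom : (Fstar {1}).toReal = a)
    (hcdf : ∀ x : ℝ, 0 ≤ x → x ≤ s →
      (Fstar (Set.Iic x)).toReal = (1 - a) * (x / s) ^ ((1 : ℝ) / ((n : ℝ) - 1)))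
    (hcdf2 : ∀ x : ℝ, s ≤ x → x < 1 → (Fstar (Set.Iic x)).toReal = 1 - a) :
    ∀ G : Measure ℝ, MemM μ G → winProb n G Fstar ≤ 1 / (n : ℝ) :=
  stmt_10_general n hn μ a s hμ1 ha0 haμ haeq hs Fstar hsupp hatom hcdf hcdf2
end

section
/- Let n ≥ 2 be an integer, μ ∈ (0,1), and suppose F ∈ M(μ) is a symmetric equilibrium of the frictionless game, i.e., u_n(G,F) ≤ 1/n for every G ∈ M(μ). Then the mass a := F({1}) that F places on the point 1 satisfies a ≥ μ·(1 - (1-a)^n). -/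
open MeasureTheory

lemma my_integrable_dirac (f : ℝ → ℝ) (a : ℝ) : Integrable f (Measure.dirac a) :=
  (integrable_congr (MeasureTheory.ae_eq_dirac f)).mpr (integrable_const _)

lemma my_key (n : ℕ) (hn : 1 ≤ n) (a : ℝ) :
    (n : ℝ) * a * ∑ i ∈ Finset.range n,
      ((n - 1).choose i : ℝ) * a ^ i * (1 - a) ^ (n - 1 - i) / ((i : ℝ) + 1)
      = 1 - (1 - a) ^ n := by
  have hpow : ∑ k ∈ Finset.range (n + 1),
      a ^ k * (1 - a) ^ (n - k) * (n.choose k : ℝ) = 1 := by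
    have := add_pow a (1 - a) n
    simpa using this.symm
  have hsplit : ∑ k ∈ Finset.range (n + 1), a ^ k * (1 - a) ^ (n - k) * (n.choose k : ℝ)
      = (∑ i ∈ Finset.range n, a ^ (i + 1) * (1 - a) ^ (n - (i + 1)) * (n.choose (i + 1) : ℝ))
        + (1 - a) ^ n := by
    rw [Finset.sum_range_succ']
    simp
  rw [Finset.mul_sum]
  have hterm : ∀ i ∈ Finset.range n,
      (n : ℝ) * a * (((n - 1).choose i : ℝ) * a ^ i * (1 - a) ^ (n - 1 - i) / ((i : ℝ) + 1))
        = a ^ (i + 1) * (1 - a) ^ (n - (i + 1)) * (n.choose (i + 1) : ℝ) := by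
    intro i hi
    have hc : (n : ℝ) * ((n - 1).choose i : ℝ) = (n.choose (i + 1) : ℝ) * ((i : ℝ) + 1) := by
      have h := Nat.add_one_mul_choose_eq (n - 1) i
      have hn1 : n - 1 + 1 = n := by omega
      simp only [Nat.succ_eq_add_one, hn1] at h
      exact_mod_cast h
    have hsub : n - 1 - i = n - (i + 1) := by omega
    have hi1 : ((i : ℝ) + 1) ≠ 0 := by positivity
    rw [hsub]
    field_simp
    linear_combination (a ^ (i + 1) * (1 - a) ^ (n - (i + 1))) * hc
  rw [Finset.sum_congr rfl hterm]
  linarith [hpow, hsplit]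

/-- If `F ∈ M(μ)` is a symmetric equilibrium of the frictionless game, then the
mass `a = F({1})` it places on `1` satisfies `a ≥ μ(1-(1-a)^n)`. -/
theorem stmt_13 (n : ℕ) (hn : 2 ≤ n) (μ : ℝ) (hμ : 0 < μ) (hμ1 : μ < 1)
    (F : Measure ℝ) (hF : MemM μ F)
    (heq : ∀ G : Measure ℝ, MemM μ G → winProb n G F ≤ 1 / (n : ℝ)) :
    μ * (1 - (1 - (F {1}).toReal) ^ n) ≤ (F {1}).toReal := by
  set a : ℝ := (F {1}).toReal with ha_def
  by_cases ha : a = 0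
  · simp [ha]
  have ha0 : 0 < a := lt_of_le_of_ne ENNReal.toReal_nonneg (Ne.symm ha)
  obtain ⟨hFp, hFsupp, hFmean⟩ := hF
  -- the candidate deviation G
  set G : Measure ℝ := ENNReal.ofReal (1 - μ) • Measure.dirac 0
      + ENNReal.ofReal μ • Measure.dirac 1 with hG_def
  have h1μ : (0:ℝ) ≤ 1 - μ := by linarith
  -- integrability helpers
  have hint : ∀ f : ℝ → ℝ, ∫ x, f x ∂G = (1 - μ) * f 0 + μ * f 1 := by
    intro f
    rw [hG_def, integral_add_measure
        ((my_integrable_dirac f 0).smul_measure ENNReal.ofReal_ne_top)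
        ((my_integrable_dirac f 1).smul_measure ENNReal.ofReal_ne_top),
      integral_smul_measure, integral_smul_measure, integral_dirac, integral_dirac,
      ENNReal.toReal_ofReal h1μ, ENNReal.toReal_ofReal hμ.le]
    simp only [smul_eq_mul]
  have hGmem : MemM μ G := by
    refine ⟨⟨?_⟩, ?_, ?_⟩
    · rw [hG_def]
      simp only [Measure.add_apply, Measure.smul_apply, smul_eq_mul, measure_univ, mul_one]
      rw [← ENNReal.ofReal_add h1μ hμ.le]
      norm_num
    · rw [hG_def]
      have hms : MeasurableSet (Set.Icc (0:ℝ) 1)ᶜ := measurableSet_Icc.compl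
      simp only [Measure.add_apply, Measure.smul_apply, smul_eq_mul]
      rw [Measure.dirac_apply' _ hms, Measure.dirac_apply' _ hms]
      have h0 : (0:ℝ) ∈ Set.Icc (0:ℝ) 1 := by constructor <;> norm_num
      have h1 : (1:ℝ) ∈ Set.Icc (0:ℝ) 1 := by constructor <;> norm_num
      simp [Set.indicator, h0, h1]
    · rw [hint (fun x => x)]
      ring
  -- masses of F
  have hIcc : F (Set.Icc (0:ℝ) 1) = 1 := by
    have h := measure_add_measure_compl (μ := F) (measurableSet_Icc : MeasurableSet (Set.Icc (0:ℝ) 1))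
    rw [hFsupp, add_zero, measure_univ] at h
    exact h
  have hunion : F (Set.Ico (0:ℝ) 1) + F {1} = 1 := by
    rw [← hIcc, ← Set.Ico_union_right (by norm_num : (0:ℝ) ≤ 1)]
    exact (measure_union (by simp [Set.disjoint_left]; exact fun a _ h => h.ne) (measurableSet_singleton 1)).symm
  have hbreal : (F (Set.Ico (0:ℝ) 1)).toReal = 1 - a := by
    have h1 : (F (Set.Ico (0:ℝ) 1)).toReal + (F {1}).toReal = 1 := by
      rw [← ENNReal.toReal_add (measure_ne_top F _) (measure_ne_top F _), hunion]
      simp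
    linarith
  -- evaluate winProb
  set S : ℝ := ∑ i ∈ Finset.range n,
      ((n - 1).choose i : ℝ) * a ^ i * (1 - a) ^ (n - 1 - i) / ((i : ℝ) + 1) with hS_def
  have hwin : winProb n G F = (1 - μ) * (∑ i ∈ Finset.range n,
        ((n - 1).choose i : ℝ) * ((F {(0:ℝ)}).toReal) ^ i
          * ((F (Set.Ico (0:ℝ) 0)).toReal) ^ (n - 1 - i) / ((i : ℝ) + 1)) + μ * S := by
    rw [winProb, hint]
    congr 1
    rw [hS_def]
    congr 1
    refine Finset.sum_congr rfl fun i hi => ?_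
    rw [← ha_def, hbreal]
  have h0nonneg : (0:ℝ) ≤ ∑ i ∈ Finset.range n,
      ((n - 1).choose i : ℝ) * ((F {(0:ℝ)}).toReal) ^ i
        * ((F (Set.Ico (0:ℝ) 0)).toReal) ^ (n - 1 - i) / ((i : ℝ) + 1) := by
    refine Finset.sum_nonneg fun i _ => ?_
    positivity
  have hμS : μ * S ≤ 1 / (n : ℝ) := by
    have h := heq G hGmem
    rw [hwin] at h
    nlinarith
  have hkey := my_key n (by omega) a
  rw [← hS_def] at hkey
  have hnpos : (0:ℝ) < n := by positivity
  calc μ * (1 - (1 - a) ^ n) = ((n : ℝ) * a) * (μ * S) := by rw [← hkey]; ring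
    _ ≤ ((n : ℝ) * a) * (1 / (n : ℝ)) := by
        apply mul_le_mul_of_nonneg_left hμS (by positivity)
    _ = a := by field_simp
end

section
/- Let n ≥ 2 be an integer and μ ∈ (1/n, 1). Then the equation a = μ·(1 - (1-a)^n) has exactly one solution a in the open interval (0,1), and this solution satisfies 0 < a < μ. -/
/-- For `n ≥ 2` and `μ ∈ (1/n,1)`, the equation `a = μ(1-(1-a)^n)` has exactly
one solution `a ∈ (0,1)`, and this solution satisfies `0 < a < μ`. -/
theorem stmt_14 (n : ℕ) (hn : 2 ≤ n) (μ : ℝ) (hμn : 1 / (n : ℝ) < μ) (hμ1 : μ < 1) :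
    ∃ a : ℝ, a ∈ Set.Ioo (0:ℝ) 1 ∧ a = μ * (1 - (1 - a) ^ n) ∧ a < μ ∧
      ∀ b : ℝ, b ∈ Set.Ioo (0:ℝ) 1 → b = μ * (1 - (1 - b) ^ n) → b = a := by
  have hn0 : (0:ℝ) < n := by positivity
  have hμ0 : 0 < μ := lt_trans (by positivity) hμn
  set g : ℝ → ℝ := fun x => ∑ i ∈ Finset.range n, x ^ i with hg
  have hmono : StrictMonoOn g (Set.Ici 0) := by
    intro u hu v hv huv
    apply Finset.sum_lt_sum
    · intro i _; exact pow_le_pow_left₀ hu huv.le i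
    · exact ⟨1, Finset.mem_range.mpr (by omega), by simpa using huv⟩
  have hg0 : g 0 = 1 := by
    simp only [hg]
    rw [show (∑ i ∈ Finset.range n, (0:ℝ) ^ i) = ∑ i ∈ Finset.range n, if i = 0 then 1 else 0
      from Finset.sum_congr rfl fun i _ => by split <;> simp_all [zero_pow]]
    simp [Finset.sum_ite_eq', Finset.mem_range]; omega
  have hg1 : g 1 = n := by simp [hg]
  have hcont : ContinuousOn g (Set.Icc 0 1) :=
    (continuous_finset_sum _ fun i _ => continuous_pow i).continuousOn
  have hmem : (1/μ) ∈ Set.Ioo (g 0) (g 1) := by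
    rw [hg0, hg1]
    constructor
    · rw [lt_div_iff₀ hμ0]; linarith
    · rw [div_lt_iff₀ hμ0]; rw [div_lt_iff₀ hn0] at hμn; nlinarith
  obtain ⟨x, hx, hgx⟩ := intermediate_value_Ioo zero_le_one hcont hmem
  have hμg : μ * g x = 1 := by rw [hgx]; field_simp
  have hgm : g x * (x - 1) = x ^ n - 1 := geom_sum_mul x n
  have heq : 1 - x = μ * (1 - x ^ n) := by linear_combination (-μ) * hgm + (x - 1) * hμg
  refine ⟨1 - x, ⟨by linarith [hx.2], by linarith [hx.1]⟩, ?_, ?_, ?_⟩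
  · rw [show (1:ℝ) - (1 - x) = x by ring]; exact heq
  · nlinarith [pow_pos hx.1 n]
  · intro b hb hbeq
    have hgmb : g (1 - b) * ((1 - b) - 1) = (1 - b) ^ n - 1 := geom_sum_mul (1 - b) n
    have h1 : b * (μ * g (1 - b)) = b * 1 := by
      linear_combination (-1 : ℝ) * hbeq - μ * hgmb
    have h2 : μ * g (1 - b) = 1 := mul_left_cancel₀ (ne_of_gt hb.1) h1
    have hgyb : g (1 - b) = g x := by
      rw [hgx, eq_div_iff hμ0.ne']; linarith
    have hxy : 1 - b = x := hmono.injOn (Set.mem_Ici.mpr (by linarith [hb.2]))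
      (Set.mem_Ici.mpr hx.1.le) hgyb
    linarith
end

section
/- Fix μ ∈ (0,1). For each integer n ≥ 2 with μ > 1/n, let a_n ∈ (0, μ) be the unique positive solution of a = μ·(1 - (1-a)^n). Then the sequence (a_n) is strictly increasing in n, and a_n → μ as n → ∞. In particular, in the limit the symmetric equilibrium distribution converges to the fully informative distribution supported on {0,1}. -/
open Filter

private lemma key_sum (μ : ℝ) (hμ : 0 < μ) (n : ℕ) (x : ℝ) (hx : 0 < x)
    (heq : x = μ * (1 - (1 - x) ^ n)) :
    ∑ k ∈ Finset.range n, (1 - x) ^ k = 1 / μ := by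
  have h1 : (∑ i ∈ Finset.range n, (1 - x) ^ i) * x = 1 - (1 - x) ^ n := by
    linear_combination -geom_sum_mul (1 - x) n
  have h2 : (μ * ∑ i ∈ Finset.range n, (1 - x) ^ i) * x = 1 * x := by
    rw [one_mul, mul_assoc, h1]; exact heq.symm
  have h3 := mul_right_cancel₀ hx.ne' h2
  rw [eq_div_iff hμ.ne']
  linarith [h3]

/-- Fix `μ ∈ (0,1)`. For each `n ≥ 2` with `μ > 1/n`, let `a n ∈ (0,μ)` be the
unique positive solution of `a = μ(1-(1-a)^n)`. Then `(a n)` is strictly increasing in `n`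
and `a n → μ` as `n → ∞`. -/
theorem stmt_15 (μ : ℝ) (hμ : 0 < μ) (hμ1 : μ < 1)
    (a : ℕ → ℝ)
    (ha : ∀ n : ℕ, 2 ≤ n → 1 / (n : ℝ) < μ →
      a n ∈ Set.Ioo (0:ℝ) μ ∧ a n = μ * (1 - (1 - a n) ^ n)) :
    (∀ m n : ℕ, 2 ≤ m → 1 / (m : ℝ) < μ → m < n → a m < a n) ∧
      Tendsto a atTop (nhds μ) := by
  constructor
  · intro m n hm hμm hmn
    have hn2 : 2 ≤ n := le_trans hm hmn.le
    have hm0' : (0:ℝ) < m := by exact_mod_cast Nat.lt_of_lt_of_le Nat.zero_lt_two hm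
    have hμn : 1 / (n : ℝ) < μ := by
      refine lt_of_le_of_lt ?_ hμm
      apply one_div_le_one_div_of_le hm0'
      exact_mod_cast hmn.le
    obtain ⟨⟨hm0, hmμ⟩, heqm⟩ := ha m hm hμm
    obtain ⟨⟨hn0, hnμ⟩, heqn⟩ := ha n hn2 hμn
    have Sm := key_sum μ hμ m (a m) hm0 heqm
    have Sn := key_sum μ hμ n (a n) hn0 heqn
    by_contra hc
    push_neg at hc
    have h1 : ∑ k ∈ Finset.range n, (1 - a m) ^ k ≤
        ∑ k ∈ Finset.range n, (1 - a n) ^ k := by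
      refine Finset.sum_le_sum fun k _ => ?_
      exact pow_le_pow_left₀ (by linarith) (by linarith) k
    have h2 : ∑ k ∈ Finset.range m, (1 - a m) ^ k <
        ∑ k ∈ Finset.range n, (1 - a m) ^ k := by
      refine Finset.sum_lt_sum_of_subset (Finset.range_subset_range.2 hmn.le)
        (Finset.mem_range.2 hmn) (by simp) (pow_pos (by linarith) m) ?_
      intro j _ _
      exact pow_nonneg (by linarith) j
    rw [Sm] at h2
    rw [Sn] at h1
    linarith
  · rw [Metric.tendsto_atTop]
    intro ε hε
    have hmin : 0 < min ε μ := lt_min hε hμ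
    set δ : ℝ := min ε μ / 2 with hδdef
    have hδ0 : 0 < δ := by positivity
    have hδμ : δ < μ := by
      have := min_le_right ε μ
      simp only [hδdef]; linarith
    have hδε : δ ≤ ε := by
      have := min_le_left ε μ
      simp only [hδdef]; linarith
    set r : ℝ := 1 - μ + δ with hrdef
    have hr0 : 0 < r := by simp only [hrdef]; linarith
    have hr1 : r < 1 := by simp only [hrdef]; linarith
    have hrn : Tendsto (fun n : ℕ => r ^ n) atTop (nhds 0) :=
      tendsto_pow_atTop_nhds_zero_of_lt_one hr0.le hr1
    have ev1 : ∀ᶠ n : ℕ in atTop, r ^ n < δ / μ :=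
      hrn.eventually_lt_const (by positivity)
    have ev2 : ∀ᶠ n : ℕ in atTop, 2 ≤ n := eventually_ge_atTop 2
    have ev3 : ∀ᶠ n : ℕ in atTop, 1 / (n : ℝ) < μ :=
      tendsto_one_div_atTop_nhds_zero_nat.eventually_lt_const hμ
    obtain ⟨N, hN⟩ := eventually_atTop.1 ((ev1.and ev2).and ev3)
    refine ⟨N, fun n hn => ?_⟩
    obtain ⟨⟨hrδ, hn2⟩, hμn⟩ := hN n hn
    obtain ⟨⟨ha0, haμ⟩, heq⟩ := ha n hn2 hμn
    have hS := key_sum μ hμ n (a n) ha0 heq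
    have hkey : μ - δ < a n := by
      by_contra hc
      push_neg at hc
      have hle : r ≤ 1 - a n := by simp only [hrdef]; linarith
      have h1 : ∑ k ∈ Finset.range n, r ^ k ≤
          ∑ k ∈ Finset.range n, (1 - a n) ^ k := by
        refine Finset.sum_le_sum fun k _ => pow_le_pow_left₀ hr0.le hle k
      have h2 : ∑ k ∈ Finset.range n, r ^ k = (1 - r ^ n) / (1 - r) := by
        rw [geom_sum_eq hr1.ne n, ← neg_sub 1 (r ^ n), ← neg_sub 1 r, neg_div_neg_eq]
      have h3 : (1:ℝ) / μ < (1 - r ^ n) / (1 - r) := by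
        rw [div_lt_div_iff₀ hμ (by linarith : (0:ℝ) < 1 - r)]
        have h4 : r ^ n * μ < δ := (lt_div_iff₀ hμ).mp hrδ
        have : (1:ℝ) - r = μ - δ := by simp only [hrdef]; ring
        nlinarith
      rw [hS] at h1
      rw [h2] at h1
      linarith
    rw [Real.dist_eq, abs_lt]
    constructor <;> linarith
end

section
/- Let n ≥ 2 be an integer, μ ∈ (0,1), a ∈ [0,1), and 0 < t < s ≤ 1, and let F_t be the Borel probability measure on [0,1] with an atom of mass a at 1 and cumulative distribution function F_t(x) = (1-a)·((x-t)/(s-t))^{1/(n-1)} for x ∈ [t,s] (F_t(x) = 0 for x < t), and suppose F_t has mean μ. Then F_t is not a symmetric equilibrium of the frictionless game: there exists G ∈ M(μ) with u_n(G, F_t) > 1/n. Consequently, the lower endpoint of the continuous portion of a symmetric equilibrium distribution must be 0. -/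
open MeasureTheory

/-!
Against `F` the pure strategy `x` earns `W x := purePayoff n F x`, with `W 0 = 0`,
`W s = (1-a)^(n-1)` and `n a W 1 = 1 - (1-a)^n`; hence `1/n = a W 1 + (1-a) W s / n`, and the
layer-cake formula gives `μ = a + (1-a) (t + (s-t)/n)`. On `[t, s]` the payoff is linear from
`(t, 0)` to `(s, W s)`, strictly below the chord from `(0, 0)` because `t > 0`. So the concave
envelope of `W` on `{0, s, 1}` exceeds `1/n` at `μ`, and the two-point distribution realising
it (on `{0, 1}`, `{0, s}` or `{s, 1}`) is a profitable deviation.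
-/

open Set Filter Function ProbabilityTheory

section TwoPoint

variable {α : Type*} [MeasurableSpace α]

noncomputable def twoPoint (p : ℝ) (x y : α) : Measure α :=
  ENNReal.ofReal p • Measure.dirac x + ENNReal.ofReal (1 - p) • Measure.dirac y

variable {p : ℝ}

lemma isProbabilityMeasure_twoPoint (hp0 : 0 ≤ p) (hp1 : p ≤ 1) (x y : α) :
    IsProbabilityMeasure (twoPoint p x y) := by
  constructor
  simp only [twoPoint, Measure.add_apply, Measure.smul_apply, measure_univ, smul_eq_mul, mul_one]
  rw [← ENNReal.ofReal_add hp0 (sub_nonneg.2 hp1), add_sub_cancel, ENNReal.ofReal_one]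

lemma twoPoint_apply_eq_zero {x y : α} {S : Set α} (hS : MeasurableSet S) (hx : x ∉ S)
    (hy : y ∉ S) : twoPoint p x y S = 0 := by
  simp [twoPoint, Measure.dirac_apply' _ hS, hx, hy]

lemma integral_twoPoint [MeasurableSingletonClass α] {E : Type*} [NormedAddCommGroup E]
    [NormedSpace ℝ E] [CompleteSpace E] (hp0 : 0 ≤ p) (hp1 : p ≤ 1) (f : α → E)
    (x y : α) :
    ∫ z, f z ∂twoPoint p x y = p • f x + (1 - p) • f y := by
  rw [twoPoint, integral_add_measure, integral_smul_measure, integral_smul_measure,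
    integral_dirac, integral_dirac, ENNReal.toReal_ofReal hp0,
    ENNReal.toReal_ofReal (sub_nonneg.2 hp1)]
  all_goals exact (integrable_dirac (by simp)).smul_measure ENNReal.ofReal_ne_top

end TwoPoint

lemma memM_twoPoint {μ p x y : ℝ} (hp0 : 0 ≤ p) (hp1 : p ≤ 1) (hx : x ∈ Icc 0 1)
    (hy : y ∈ Icc 0 1) (hmean : p * x + (1 - p) * y = μ) : MemM μ (twoPoint p x y) :=
  ⟨isProbabilityMeasure_twoPoint hp0 hp1 x y,
    twoPoint_apply_eq_zero measurableSet_Icc.compl (not_not.2 hx) (not_not.2 hy),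
    by rw [integral_twoPoint hp0 hp1]; exact hmean⟩

lemma succ_mul_mul_sum_choose_mul_pow_div_succ (m : ℕ) (a b : ℝ) :
    ((m : ℝ) + 1) * a * ∑ i ∈ Finset.range (m + 1),
      (m.choose i : ℝ) * a ^ i * b ^ (m - i) / ((i : ℝ) + 1) =
      (a + b) ^ (m + 1) - b ^ (m + 1) := by
  rw [add_pow,
    Finset.sum_range_succ' (fun j => a ^ j * b ^ (m + 1 - j) * ((m + 1).choose j : ℝ)) (m + 1)]
  simp only [pow_zero, Nat.choose_zero_right, Nat.cast_one, mul_one, one_mul, Nat.sub_zero,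
    add_sub_cancel_right, Finset.mul_sum]
  refine Finset.sum_congr rfl fun i _ => ?_
  have hchoose : ((m : ℝ) + 1) * m.choose i = (m + 1).choose (i + 1) * ((i : ℝ) + 1) := by
    exact_mod_cast Nat.add_one_mul_choose_eq m i
  rw [show m + 1 - (i + 1) = m - i by omega]
  field_simp
  linear_combination (a ^ i * a * b ^ (m - i)) * hchoose

noncomputable def purePayoff (n : ℕ) (F : Measure ℝ) (x : ℝ) : ℝ :=
  ∑ i ∈ Finset.range n,
    ((n - 1).choose i : ℝ) * ((F {x}).toReal) ^ i * ((F (Set.Ico 0 x)).toReal) ^ (n - 1 - i)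
      / ((i : ℝ) + 1)

lemma winProb_twoPoint {p : ℝ} (hp0 : 0 ≤ p) (hp1 : p ≤ 1) (n : ℕ) (F : Measure ℝ)
    (x y : ℝ) :
    winProb n (twoPoint p x y) F = p * purePayoff n F x + (1 - p) * purePayoff n F y :=
  integral_twoPoint hp0 hp1 (purePayoff n F) x y

lemma leftLim_eq_of_eqOn_Ioo {f g : ℝ → ℝ} {t s : ℝ} (hts : t < s)
    (hfg : EqOn f g (Ioo t s)) (hg : ContinuousWithinAt g (Iio s) s) : leftLim f s = g s :=
  leftLim_eq_of_tendsto (hg.tendsto.congr' (eventuallyEq_of_mem (Ioo_mem_nhdsLT hts) hfg).symm)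

section CDF

variable {F : Measure ℝ}

lemma leftLim_cdf_zero_of_cdf_zero (h0 : cdf F 0 = 0) : leftLim (cdf F) 0 = 0 :=
  le_antisymm (((monotone_cdf F).leftLim_le le_rfl).trans h0.le)
    ((cdf_nonneg F (-1)).trans ((monotone_cdf F).le_leftLim (by norm_num)))

variable [IsProbabilityMeasure F]

lemma toReal_measure_singleton_eq_cdf_sub_leftLim (x : ℝ) :
    (F {x}).toReal = cdf F x - leftLim (cdf F) x := by
  rw [← congrArg (· {x}) (measure_cdf F), StieltjesFunction.measure_singleton,
    ENNReal.toReal_ofReal (sub_nonneg.2 ((monotone_cdf F).leftLim_le le_rfl))]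

lemma toReal_measure_Ico_zero_eq_leftLim_cdf (h0 : cdf F 0 = 0) {x : ℝ} (hx : 0 ≤ x) :
    (F (Ico 0 x)).toReal = leftLim (cdf F) x := by
  rw [← congrArg (· (Ico 0 x)) (measure_cdf F), StieltjesFunction.measure_Ico,
    leftLim_cdf_zero_of_cdf_zero h0, sub_zero, ENNReal.toReal_ofReal]
  exact (leftLim_cdf_zero_of_cdf_zero h0).symm.le.trans ((monotone_cdf F).leftLim hx)

variable {n : ℕ} {x : ℝ}

lemma purePayoff_eq_sum_cdf (h0 : cdf F 0 = 0) (hx : 0 ≤ x) :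
    purePayoff n F x = ∑ i ∈ Finset.range n, ((n - 1).choose i : ℝ) *
      (cdf F x - leftLim (cdf F) x) ^ i * leftLim (cdf F) x ^ (n - 1 - i) / ((i : ℝ) + 1) := by
  simp only [purePayoff, toReal_measure_singleton_eq_cdf_sub_leftLim,
    toReal_measure_Ico_zero_eq_leftLim_cdf h0 hx]

lemma mul_toReal_measure_singleton_mul_purePayoff (hn : 1 ≤ n) (h0 : cdf F 0 = 0)
    (hx : 0 ≤ x) :
    n * (F {x}).toReal * purePayoff n F x = cdf F x ^ n - (cdf F x - (F {x}).toReal) ^ n := by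
  obtain ⟨m, rfl⟩ := Nat.exists_eq_add_of_le' hn
  rw [purePayoff_eq_sum_cdf h0 hx, toReal_measure_singleton_eq_cdf_sub_leftLim, sub_sub_cancel,
    Nat.add_sub_cancel, Nat.cast_succ, succ_mul_mul_sum_choose_mul_pow_div_succ, sub_add_cancel]

lemma purePayoff_of_leftLim_cdf_eq (hn : 1 ≤ n) (h0 : cdf F 0 = 0) (hx : 0 ≤ x)
    (hcont : leftLim (cdf F) x = cdf F x) : purePayoff n F x = cdf F x ^ (n - 1) := by
  rw [purePayoff_eq_sum_cdf h0 hx, hcont, sub_self,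
    Finset.sum_eq_single_of_mem 0 (Finset.mem_range.2 hn)]
  · simp
  · intro i _ hi
    simp [hi]

end CDF

lemma intervalIntegral_sub_div_rpow {t s e : ℝ} (hts : t < s) (he : -1 < e) :
    ∫ y in t..s, ((y - t) / (s - t)) ^ e = (s - t) / (e + 1) := by
  have hst : s - t ≠ 0 := (sub_pos.2 hts).ne'
  simp_rw [sub_div]
  rw [intervalIntegral.integral_comp_div_sub (fun u => u ^ e) hst, sub_self, ← sub_div,
    div_self hst, integral_rpow (Or.inl he), Real.one_rpow, Real.zero_rpow (by linarith),
    smul_eq_mul]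
  ring

section Mean

variable {F : Measure ℝ} [IsProbabilityMeasure F]

lemma cdf_eq_one_of_measure_compl_eq_zero {S : Set ℝ} {y : ℝ} (hS : F Sᶜ = 0)
    (hSy : S ⊆ Iic y) : cdf F y = 1 := by
  rw [cdf_eq_real, measureReal_def, (prob_compl_eq_zero_iff measurableSet_Iic).1
    (measure_mono_null (compl_subset_compl.2 hSy) hS), ENNReal.toReal_one]

lemma integral_id_eq_intervalIntegral_one_sub_cdf (hsupp : F (Icc 0 1)ᶜ = 0) :
    ∫ x, x ∂F = ∫ y in (0 : ℝ)..1, (1 - cdf F y) := by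
  have hae : ∀ᵐ x ∂F, x ∈ Icc (0 : ℝ) 1 := mem_ae_iff.2 hsupp
  have hint : Integrable (fun x : ℝ => x) F :=
    (integrable_const (1 : ℝ)).mono' aestronglyMeasurable_id
      (hae.mono fun x hx => abs_le.2 ⟨by linarith [hx.1], hx.2⟩)
  have htail : ∀ y : ℝ, F.real {x | y < x} = 1 - cdf F y := fun y => by
    rw [cdf_eq_real, ← probReal_compl_eq_one_sub measurableSet_Iic, compl_Iic]
    rfl
  rw [hint.integral_eq_integral_meas_lt (hae.mono fun x hx => hx.1),
    intervalIntegral.integral_of_le zero_le_one]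
  simp_rw [htail]
  refine setIntegral_eq_of_subset_of_forall_sdiff_eq_zero measurableSet_Ioi Ioc_subset_Ioi_self
    fun y hy => ?_
  have hy1 : 1 ≤ y := le_of_lt (by simpa using hy)
  rw [cdf_eq_one_of_measure_compl_eq_zero hsupp fun x hx => hx.2.trans hy1, sub_self]

lemma integral_id_eq_of_cdf_eq_rpow {a t s e : ℝ} (hsupp : F (Icc 0 1)ᶜ = 0) (ht : 0 ≤ t)
    (hts : t < s) (hs1 : s ≤ 1) (he : 0 ≤ e)
    (hcdf0 : ∀ x, 0 ≤ x → x < t → cdf F x = 0)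
    (hcdf : ∀ x, t ≤ x → x ≤ s → cdf F x = (1 - a) * ((x - t) / (s - t)) ^ e)
    (hcdf2 : ∀ x, s ≤ x → x < 1 → cdf F x = 1 - a) :
    ∫ x, x ∂F = 1 - (1 - a) * (1 - s + (s - t) / (e + 1)) := by
  have hint : ∀ u v : ℝ, IntervalIntegrable (fun y => 1 - cdf F y) volume u v := fun u v =>
    Antitone.intervalIntegrable fun x y hxy => sub_le_sub_left (monotone_cdf F hxy) 1
  have hlow : ∫ y in (0 : ℝ)..t, (1 - cdf F y) = t := by
    rw [intervalIntegral.integral_congr_Ioo_of_le ht (g := fun _ => 1)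
      fun y hy => by rw [hcdf0 y hy.1.le hy.2, sub_zero]]
    simp
  have hmid : ∫ y in t..s, (1 - cdf F y) = (s - t) - (1 - a) * ((s - t) / (e + 1)) := by
    rw [intervalIntegral.integral_congr_Ioo_of_le hts.le
      (g := fun y => 1 - (1 - a) * ((y - t) / (s - t)) ^ e)
      fun y hy => by rw [hcdf y hy.1.le hy.2.le], intervalIntegral.integral_sub,
      intervalIntegral.integral_const_mul, intervalIntegral_sub_div_rpow hts (by linarith)]
    · simp
    · exact intervalIntegrable_const
    · exact ((Real.continuous_rpow_const he).comp (by fun_prop)).intervalIntegrable _ _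
        |>.const_mul _
  have hhigh : ∫ y in s..1, (1 - cdf F y) = a * (1 - s) := by
    rw [intervalIntegral.integral_congr_Ioo_of_le hs1 (g := fun _ => a)
      fun y hy => by rw [hcdf2 y hy.1.le hy.2]; ring]
    simp [mul_comm]
  rw [integral_id_eq_intervalIntegral_one_sub_cdf hsupp,
    ← intervalIntegral.integral_add_adjacent_intervals (hint 0 t) (hint t 1),
    ← intervalIntegral.integral_add_adjacent_intervals (hint t s) (hint s 1), hlow, hmid, hhigh]
  ring

end Mean

lemma exists_twoPoint_mean_eq_payoff_gt {n : ℕ} (hn : 2 ≤ n) {μ a t s : ℝ} (ha0 : 0 ≤ a)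
    (ha1 : a < 1) (ht : 0 < t) (hts : t < s) (hs1 : s ≤ 1)
    (hμ : μ = a + (1 - a) * (t + (s - t) / n)) (W : ℝ → ℝ) (hW0 : W 0 = 0)
    (hWs : W s = (1 - a) ^ (n - 1)) (hW1 : n * a * W 1 = 1 - (1 - a) ^ n) :
    ∃ p x y : ℝ, 0 ≤ p ∧ p ≤ 1 ∧ x ∈ Icc (0 : ℝ) 1 ∧ y ∈ Icc (0 : ℝ) 1 ∧
      p * x + (1 - p) * y = μ ∧ 1 / (n : ℝ) < p * W x + (1 - p) * W y := by
  obtain ⟨b, rfl⟩ : ∃ b, a = 1 - b := ⟨1 - a, by ring⟩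
  rw [sub_sub_cancel] at hμ hWs hW1
  generalize hB : b ^ (n - 1) = B at hWs
  generalize hU : W 1 = U at hW1
  have hN : (2 : ℝ) ≤ n := by exact_mod_cast hn
  have hb : 0 < b := by linarith
  have hB0 : 0 < B := hB ▸ pow_pos hb _
  have hs0 : 0 < s := ht.trans hts
  have hpayoff : 1 / (n : ℝ) = (1 - b) * U + b * B / n := by
    have hbB : b ^ n = b * B := by rw [← hB, ← pow_succ', Nat.sub_add_cancel (by omega)]
    field_simp
    linear_combination hbB - hW1
  have hμ0 : 0 < μ := by
    rw [hμ]
    have := sub_pos.2 hts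
    positivity
  have hμ1 : μ < 1 := by
    have : b * (s - t) * (n - 1) / n > 0 := by
      have := sub_pos.2 hts; have : (0 : ℝ) < n - 1 := by linarith
      positivity
    have : μ = 1 - b * (1 - s) - b * (s - t) * (n - 1) / n := by rw [hμ]; field_simp; ring
    nlinarith
  by_cases hA : B < s * U
  · refine ⟨1 - μ, 0, 1, by linarith, by linarith, by simp, by simp, by ring, ?_⟩
    have hU0 : 0 < U := pos_of_mul_pos_right (hB0.trans hA) hs0.le
    have hgain : μ * U - 1 / n = b / n * ((s * U - B) + (n - 1) * t * U) := by
      rw [hpayoff, hμ]; field_simp; ring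
    have : 0 < b / n * ((s * U - B) + (n - 1) * t * U) := by
      have := sub_pos.2 hA; have : (0 : ℝ) ≤ n - 1 := by linarith
      positivity
    rw [hW0, hU]
    linarith
  push Not at hA
  by_cases hμs : μ ≤ s
  · refine ⟨1 - μ / s, 0, s, ?_, ?_, by simp, ⟨hs0.le, hs1⟩, ?_, ?_⟩
    · rw [sub_nonneg, div_le_one hs0]; exact hμs
    · linarith [div_pos hμ0 hs0]
    · field_simp; ring
    have hgain : μ / s * B - 1 / n = ((1 - b) * (B - s * U) + b * B * t * (n - 1) / n) / s := by
      rw [hpayoff, hμ]; field_simp; ring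
    have : 0 < ((1 - b) * (B - s * U) + b * B * t * (n - 1) / n) / s := by
      have := sub_nonneg.2 hA; have : 0 ≤ 1 - b := by linarith
      have : (0 : ℝ) < n - 1 := by linarith
      positivity
    rw [hW0, hWs]
    linarith
  push Not at hμs
  have hs1' : 0 < 1 - s := by linarith
  refine ⟨(1 - μ) / (1 - s), s, 1, by positivity, ?_, ⟨hs0.le, hs1⟩, by simp, ?_, ?_⟩
  · rw [div_le_one hs1']; linarith
  · field_simp; ring
  -- the chord from `(s, B)` to `(1, U)` is flatter than the line through `(t, 0)` and `(s, B)`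
  have hslope : (U - B) / (1 - s) * (s - t) < B := by
    rw [div_mul_eq_mul_div, div_lt_iff₀ hs1']
    nlinarith [mul_nonneg (sub_nonneg.2 hA) (sub_nonneg.2 hts.le), mul_pos (mul_pos hB0 hs1') ht]
  have hgain : (1 - μ) / (1 - s) * B + (1 - (1 - μ) / (1 - s)) * U - 1 / n
      = b * (n - 1) / n * (B - (U - B) / (1 - s) * (s - t)) := by
    rw [hpayoff, hμ]; field_simp; ring
  have : 0 < b * (n - 1) / n * (B - (U - B) / (1 - s) * (s - t)) := by
    have := sub_pos.2 hslope; have : (0 : ℝ) < n - 1 := by linarith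
    positivity
  rw [hWs, hU]
  linarith

theorem stmt_16_general (n : ℕ) (hn : 2 ≤ n) (μ a t s : ℝ)
    (ha0 : 0 ≤ a) (ha1 : a < 1)
    (ht : 0 < t) (hts : t < s) (hs1 : s ≤ 1)
    (F : Measure ℝ) [IsProbabilityMeasure F] (hsupp : F (Set.Icc (0:ℝ) 1)ᶜ = 0)
    (hatom : (F {1}).toReal = a)
    (hcdf0 : ∀ x : ℝ, 0 ≤ x → x < t → (F (Set.Iic x)).toReal = 0)
    (hcdf : ∀ x : ℝ, t ≤ x → x ≤ s →
      (F (Set.Iic x)).toReal = (1 - a) * ((x - t) / (s - t)) ^ ((1 : ℝ) / ((n : ℝ) - 1)))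
    (hcdf2 : ∀ x : ℝ, s ≤ x → x < 1 → (F (Set.Iic x)).toReal = 1 - a)
    (hmean : (∫ x, x ∂F) = μ) :
    ∃ G : Measure ℝ, MemM μ G ∧ 1 / (n : ℝ) < winProb n G F := by
  have hn1 : (1 : ℝ) ≤ n - 1 := by linarith [(Nat.ofNat_le_cast.2 hn : (2 : ℝ) ≤ n)]
  have he : 0 < (1 : ℝ) / ((n : ℝ) - 1) := one_div_pos.2 (by linarith)
  simp only [← measureReal_def, ← cdf_eq_real] at hcdf0 hcdf hcdf2
  have h0 : cdf F 0 = 0 := hcdf0 0 le_rfl ht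
  have hs : cdf F s = 1 - a := by
    rw [hcdf s hts.le le_rfl, div_self (sub_pos.2 hts).ne', Real.one_rpow, mul_one]
  have hμ : μ = a + (1 - a) * (t + (s - t) / n) := by
    rw [← hmean, integral_id_eq_of_cdf_eq_rpow hsupp ht.le hts hs1 he.le hcdf0 hcdf hcdf2]
    field_simp
    ring
  have hW0 : purePayoff n F 0 = 0 := by
    rw [purePayoff_of_leftLim_cdf_eq (by omega) h0 le_rfl
      (by rw [leftLim_cdf_zero_of_cdf_zero h0, h0]), h0, zero_pow (by omega)]
  have hWs : purePayoff n F s = (1 - a) ^ (n - 1) := by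
    have hcont :
        Continuous fun x => (1 - a) * ((x - t) / (s - t)) ^ ((1 : ℝ) / ((n : ℝ) - 1)) := by
      fun_prop (disch := exact he.le)
    have hleft := leftLim_eq_of_eqOn_Ioo hts (fun x hx => hcdf x hx.1.le hx.2.le)
      hcont.continuousWithinAt
    rw [purePayoff_of_leftLim_cdf_eq (by omega) h0 (ht.trans hts).le
      (hleft.trans (hcdf s hts.le le_rfl).symm), hs]
  have hW1 : n * a * purePayoff n F 1 = 1 - (1 - a) ^ n := by
    rw [← hatom, mul_toReal_measure_singleton_mul_purePayoff (by omega) h0 zero_le_one,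
      cdf_eq_one_of_measure_compl_eq_zero hsupp fun x hx => hx.2, one_pow]
  obtain ⟨p, x, y, hp0, hp1, hx, hy, hxy, hgt⟩ :=
    exists_twoPoint_mean_eq_payoff_gt hn ha0 ha1 ht hts hs1 hμ (purePayoff n F) hW0 hWs hW1
  exact ⟨twoPoint p x y, memM_twoPoint hp0 hp1 hx hy hxy, by rwa [winProb_twoPoint hp0 hp1]⟩

/-- For `n ≥ 2`, a distribution with an atom of mass `a` at `1` and continuous
portion with cdf `(1-a)((x-t)/(s-t))^{1/(n-1)}` on `[t,s]` with `t > 0` and mean `μ` is not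
a symmetric equilibrium of the frictionless game: the lower endpoint of the continuous
portion of a symmetric equilibrium distribution must be `0`. -/
theorem stmt_16 (n : ℕ) (hn : 2 ≤ n) (μ a t s : ℝ)
    (hμ : 0 < μ) (hμ1 : μ < 1) (ha0 : 0 ≤ a) (ha1 : a < 1)
    (ht : 0 < t) (hts : t < s) (hs1 : s ≤ 1)
    (F : Measure ℝ) [IsProbabilityMeasure F] (hsupp : F (Set.Icc (0:ℝ) 1)ᶜ = 0)
    (hatom : (F {1}).toReal = a)
    (hcdf0 : ∀ x : ℝ, 0 ≤ x → x < t → (F (Set.Iic x)).toReal = 0)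
    (hcdf : ∀ x : ℝ, t ≤ x → x ≤ s →
      (F (Set.Iic x)).toReal = (1 - a) * ((x - t) / (s - t)) ^ ((1 : ℝ) / ((n : ℝ) - 1)))
    (hcdf2 : ∀ x : ℝ, s ≤ x → x < 1 → (F (Set.Iic x)).toReal = 1 - a)
    (hmean : (∫ x, x ∂F) = μ) :
    ∃ G : Measure ℝ, MemM μ G ∧ 1 / (n : ℝ) < winProb n G F :=
  stmt_16_general n hn μ a t s ha0 ha1 ht hts hs1 F hsupp hatom hcdf0 hcdf hcdf2 hmean
end

section
/- Let n ≥ 2 be an integer and μ ∈ [1/n, 1), and let a ∈ [0,μ) satisfy a = μ(1-(1-a)^n) with s = nμ(1-a)^{n-1}. Let Φ : [0,1] → [0,1] be the cumulative distribution function of F*, i.e., Φ(x) = (1-a)(x/s)^{1/(n-1)} for x ∈ [0,s], Φ(x) = 1-a for x ∈ [s,1), and Φ(1) = 1. Then the expected maximum of n i.i.d. draws from F*, namely ∫_0^1 (1 - Φ(t)^n) dt, equals 1 - (1-a)^n + (n·s/(2n-1))·(s/(nμ))^{n/(n-1)}. -/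
/-!
Since `Φ = (1 - a) (t / s)^{1/(n-1)}` on `[0, s]` and `Φ = 1 - a` on `[s, 1)`, almost everywhere on
`[0, 1]` we have `Φ(t)^n = (1 - a)^n (min t s / s)^q` with `q = n/(n-1)`. Integrating the power on
`[0, s]` and the constant on `[s, 1]` gives `1 - (1 - a)^n + (1 - a)^n s q/(q + 1)`, and
`q/(q + 1) = n/(2n - 1)` while `(s/(nμ))^q = ((1 - a)^{n-1})^q = (1 - a)^n`. That `s ≤ 1`, needed
for the split, follows from `Φ 1 = 1`.
-/

open MeasureTheory Set

theorem mul_one_div_rpow_lt_one {b s p : ℝ} (hb : b ≤ 1) (hs : 1 < s) (hp : 0 < p) :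
    b * (1 / s) ^ p < 1 :=
  calc b * (1 / s) ^ p ≤ 1 * (1 / s) ^ p := by gcongr
    _ < 1 := by
      rw [one_mul]
      exact Real.rpow_lt_one (by positivity) ((div_lt_one (by linarith)).2 hs) hp

theorem pow_pred_rpow_div_pred {b : ℝ} (hb : 0 ≤ b) {n : ℕ} (hn : 1 ≤ n) (hn1 : (n : ℝ) ≠ 1) :
    (b ^ (n - 1)) ^ ((n : ℝ) / ((n : ℝ) - 1)) = b ^ n := by
  rw [← Real.rpow_natCast b (n - 1), ← Real.rpow_mul hb, Nat.cast_sub hn, Nat.cast_one,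
    mul_div_cancel₀ _ (sub_ne_zero.2 hn1), Real.rpow_natCast]

theorem integral_div_rpow {s q : ℝ} (hs : 0 < s) (hq : -1 < q) :
    ∫ t in (0 : ℝ)..s, (t / s) ^ q = s / (q + 1) := by
  have hq1 : q + 1 ≠ 0 := by linarith
  calc ∫ t in (0 : ℝ)..s, (t / s) ^ q = ∫ t in (0 : ℝ)..s, t ^ q / s ^ q :=
        intervalIntegral.integral_congr fun t ht => by
          rw [uIcc_of_le hs.le] at ht
          exact Real.div_rpow ht.1 hs.le q
    _ = s / (q + 1) := by
      rw [intervalIntegral.integral_div, integral_rpow (Or.inl hq),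
        Real.zero_rpow hq1, Real.rpow_add hs, Real.rpow_one]
      field_simp
      ring

theorem integral_one_sub_mul_min_div_rpow {c s q : ℝ} (hs0 : 0 < s) (hs1 : s ≤ 1) (hq : 0 ≤ q) :
    ∫ t in (0 : ℝ)..1, (1 - c * (min t s / s) ^ q) = 1 - c + c * s * q / (q + 1) := by
  set g : ℝ → ℝ := fun t => 1 - c * (min t s / s) ^ q
  have hg : Continuous g := by
    unfold g
    fun_prop (disch := exact Or.inr hq)
  have hpower : ∫ t in (0 : ℝ)..s, g t = s - c * (s / (q + 1)) :=
    calc ∫ t in (0 : ℝ)..s, g t = ∫ t in (0 : ℝ)..s, (1 - c * (t / s) ^ q) :=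
          intervalIntegral.integral_congr fun t ht => by
            rw [uIcc_of_le hs0.le] at ht
            simp only [g, min_eq_left ht.2]
      _ = s - c * (s / (q + 1)) := by
        rw [intervalIntegral.integral_sub intervalIntegrable_const
            ((by fun_prop (disch := exact Or.inr hq) :
              Continuous fun t : ℝ => c * (t / s) ^ q).intervalIntegrable _ _),
          intervalIntegral.integral_const, intervalIntegral.integral_const_mul,
          integral_div_rpow hs0 (by linarith), smul_eq_mul, mul_one, sub_zero]
  have hflat : ∫ t in s..(1 : ℝ), g t = (1 - s) * (1 - c) := by
    rw [← smul_eq_mul, ← intervalIntegral.integral_const]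
    exact intervalIntegral.integral_congr fun t ht => by
      rw [uIcc_of_le hs1] at ht
      simp only [g, min_eq_right ht.1, div_self hs0.ne', Real.one_rpow, mul_one]
  rw [← intervalIntegral.integral_add_adjacent_intervals (hg.intervalIntegrable 0 s)
    (hg.intervalIntegrable s 1), hpower, hflat]
  field_simp
  ring

theorem pow_eq_mul_min_div_rpow {Φ : ℝ → ℝ} {b s p : ℝ} (n : ℕ) (hs : 0 < s)
    (hΦ1 : ∀ x : ℝ, 0 ≤ x → x ≤ s → Φ x = b * (x / s) ^ p)
    (hΦ2 : ∀ x : ℝ, s ≤ x → x < 1 → Φ x = b) {t : ℝ} (ht0 : 0 ≤ t) (ht1 : t < 1) :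
    Φ t ^ n = b ^ n * (min t s / s) ^ (p * n) := by
  rcases le_total t s with hts | hst
  · rw [hΦ1 t ht0 hts, min_eq_left hts, mul_pow, Real.rpow_mul_natCast (div_nonneg ht0 hs.le)]
  · rw [hΦ2 t hst ht1, min_eq_right hst, div_self hs.ne', Real.one_rpow, mul_one]

theorem stmt_17_general (n : ℕ) (hn : 2 ≤ n) (μ a s : ℝ)
    (hμn : 1 / (n : ℝ) ≤ μ) (hμ1 : μ < 1)
    (ha0 : 0 ≤ a) (haμ : a < μ)
    (hs : s = (n : ℝ) * μ * (1 - a) ^ (n - 1))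
    (Φ : ℝ → ℝ)
    (hΦ1 : ∀ x : ℝ, 0 ≤ x → x ≤ s → Φ x = (1 - a) * (x / s) ^ ((1 : ℝ) / ((n : ℝ) - 1)))
    (hΦ2 : ∀ x : ℝ, s ≤ x → x < 1 → Φ x = 1 - a)
    (hΦ3 : Φ 1 = 1) :
    ∫ t in (0:ℝ)..1, (1 - (Φ t) ^ n) =
      1 - (1 - a) ^ n
        + ((n : ℝ) * s / (2 * (n : ℝ) - 1)) * (s / ((n : ℝ) * μ)) ^ ((n : ℝ) / ((n : ℝ) - 1)) := by
  have hn2 : (2 : ℝ) ≤ n := by exact_mod_cast hn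
  have hn1 : (0 : ℝ) < n - 1 := by linarith
  have hμ0 : 0 < μ := lt_of_lt_of_le (by positivity) hμn
  have hs0 : 0 < s := by
    have : 0 < 1 - a := by linarith
    rw [hs]; positivity
  have hp : (1 : ℝ) / ((n : ℝ) - 1) * n = n / ((n : ℝ) - 1) := one_div_mul_eq_div _ _
  have hs1 : s ≤ 1 := by
    by_contra! h
    have h1 := hΦ1 1 zero_le_one h.le
    rw [hΦ3] at h1
    linarith [mul_one_div_rpow_lt_one (by linarith : 1 - a ≤ 1) h (one_div_pos.2 hn1)]
  have hΦn : EqOn (fun t => 1 - Φ t ^ n)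
      (fun t => 1 - (1 - a) ^ n * (min t s / s) ^ ((n : ℝ) / ((n : ℝ) - 1))) (Ioo 0 1) :=
    fun t ht => by
      simp only [pow_eq_mul_min_div_rpow n hs0 hΦ1 hΦ2 ht.1.le ht.2, hp]
  have hsnμ : s / ((n : ℝ) * μ) = (1 - a) ^ (n - 1) := by rw [hs]; field_simp
  rw [intervalIntegral.integral_congr_Ioo_of_le zero_le_one hΦn,
    integral_one_sub_mul_min_div_rpow hs0 hs1 (by positivity), hsnμ,
    pow_pred_rpow_div_pred (by linarith) (by omega) (by linarith)]
  have hq : (n : ℝ) / (n - 1) / ((n : ℝ) / (n - 1) + 1) = n / (2 * n - 1) := by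
    rw [div_add_one hn1.ne', div_div_div_cancel_right₀ hn1.ne']
    ring
  rw [mul_div_assoc, hq]
  ring

/-- For `n ≥ 2`, `μ ∈ [1/n,1)`, with `a ∈ [0,μ)` solving `a = μ(1-(1-a)^n)` and
`s = nμ(1-a)^{n-1}`, let `Φ` be the cdf of `F*`. Then the expected maximum of `n` i.i.d.
draws from `F*`, namely `∫_0^1 (1 - Φ(t)^n) dt`, equals
`1-(1-a)^n + (ns/(2n-1))·(s/(nμ))^{n/(n-1)}`. -/
theorem stmt_17 (n : ℕ) (hn : 2 ≤ n) (μ a s : ℝ)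
    (hμn : 1 / (n : ℝ) ≤ μ) (hμ1 : μ < 1)
    (ha0 : 0 ≤ a) (haμ : a < μ) (haeq : a = μ * (1 - (1 - a) ^ n))
    (hs : s = (n : ℝ) * μ * (1 - a) ^ (n - 1))
    (Φ : ℝ → ℝ)
    (hΦ1 : ∀ x : ℝ, 0 ≤ x → x ≤ s → Φ x = (1 - a) * (x / s) ^ ((1 : ℝ) / ((n : ℝ) - 1)))
    (hΦ2 : ∀ x : ℝ, s ≤ x → x < 1 → Φ x = 1 - a)
    (hΦ3 : Φ 1 = 1) :
    ∫ t in (0:ℝ)..1, (1 - (Φ t) ^ n) =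
      1 - (1 - a) ^ n
        + ((n : ℝ) * s / (2 * (n : ℝ) - 1)) * (s / ((n : ℝ) * μ)) ^ ((n : ℝ) / ((n : ℝ) - 1)) :=
  stmt_17_general n hn μ a s hμn hμ1 ha0 haμ hs Φ hΦ1 hΦ2 hΦ3
end
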